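/- arXiv:2005.13437 — 7 statements merged into one kernel-verified Lean document; each statement's English description precedes it below -/
import Mathlib

section
/- Let Ω be a finite nonempty set, P a row-stochastic matrix on Ω (P(x,y) ≥ 0 and Σ_y P(x,y) = 1 for all x) which is transitive, meaning that for all x, x' ∈ Ω there is a bijection σ : Ω → Ω with σ(x) = x' and P(σ(a),σ(b)) = P(a,b) for all a, b, and let π be the uniform distribution on Ω; assume P(x,y) = P(y,x) for all x,y (reversibility with respect to π). Suppose f_1, ..., f_{|Ω|} : Ω → ℝ and λ_1, ..., λ_{|Ω|} ∈ ℝ satisfy: Σ_y P(x,y) f_i(y) = λ_i f_i(x) for all i and x; Σ_y π(y) f_i(y) f_j(y) = 1 if i = j and 0 otherwise; f_1(x) = 1 for all x; and λ_1 = 1. Then for every t ∈ ℕ and every subset I ⊆ {2, ..., |Ω|}: | max_{x∈Ω} (1/2)·Σ_{y∈Ω} |P^t(x,y) − 1/|Ω|| − (1/2)·|Ω|^{−2}·Σ_{x,y∈Ω} |Σ_{i∈I} f_i(x) f_i(y) λ_i^t| | ≤ (1/2)·Σ_{i∈{2,...,|Ω|}\I} |λ_i|^t. -/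
/-!
Orthonormality of the `f i` in `ℓ²(π)` says that the matrix `F = (f i x)` satisfies
`|Ω|⁻¹ F Fᵀ = 1`; as `F` is square this also gives `|Ω|⁻¹ Fᵀ F = 1`, so the eigenvectors
diagonalise `P` and `P^t(x,y) - 1/|Ω| = |Ω|⁻¹ ∑_{i ≠ i₁} f_i(x) f_i(y) λ_i^t`.
By transitivity the total variation distance of row `x` does not depend on `x`, so its maximum
equals its average over `x`, which is the double sum of the statement with `I` replaced by all
indices `i ≠ i₁`. Dropping the indices outside `I` changes each inner absolute value by at most
`∑_{i ∉ I} |f_i(x) f_i(y)| |λ_i|^t`, and by Cauchy–Schwarz `∑_x |f_i(x)| ≤ |Ω|`.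
-/

open Finset Matrix

section Spectral

variable {Ω ι R : Type*} [Fintype Ω] [Fintype ι] [DecidableEq Ω] [DecidableEq ι]

theorem Matrix.pow_eq_mul_diagonal_pow_mul [Semiring R] {P : Matrix Ω Ω R} {V : Matrix Ω ι R}
    {W : Matrix ι Ω R} {lam : ι → R} (hVW : V * W = 1) (hPV : P * V = V * diagonal lam)
    (t : ℕ) : P ^ t = V * diagonal (lam ^ t) * W := by
  have hpow : ∀ t : ℕ, P ^ t * V = V * diagonal lam ^ t := by
    intro t
    induction t with
    | zero => simp
    | succ t ih => rw [pow_succ, Matrix.mul_assoc, hPV, ← Matrix.mul_assoc, ih, pow_succ,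
        Matrix.mul_assoc]
  rw [← diagonal_pow, ← hpow, Matrix.mul_assoc, hVW, Matrix.mul_one]

theorem pow_apply_eq_sum_of_orthonormal_eigenvectors [CommRing R]
    (hcard : Fintype.card ι = Fintype.card Ω) (P : Matrix Ω Ω R) (f : ι → Ω → R) (lam : ι → R)
    (c : R) (horth : ∀ i j, ∑ y, c * f i y * f j y = if i = j then 1 else 0)
    (heig : ∀ i x, ∑ y, P x y * f i y = lam i * f i x) (t : ℕ) (x y : Ω) :
    (P ^ t) x y = c * ∑ i, f i x * f i y * lam i ^ t := by
  let F : Matrix ι Ω R := of f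
  have hWV : (c • F) * Fᵀ = 1 := by
    ext i j
    simpa [F, Matrix.mul_apply, Matrix.one_apply, mul_assoc] using horth i j
  have hPV : P * Fᵀ = Fᵀ * diagonal lam := by
    ext x i
    rw [mul_diagonal]
    simpa [F, Matrix.mul_apply, mul_comm] using heig i x
  rw [pow_eq_mul_diagonal_pow_mul ((mul_eq_one_comm_of_card_eq _ _ _ hcard).mp hWV) hPV t]
  rw [Matrix.mul_apply, mul_sum]
  refine sum_congr rfl fun i _ => ?_
  simp only [mul_diagonal, transpose_apply, Matrix.smul_apply, smul_eq_mul, F, of_apply,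
    Pi.pow_apply]
  ring

theorem pow_apply_sub_eq_sum_erase_of_orthonormal_eigenvectors [CommRing R]
    (hcard : Fintype.card ι = Fintype.card Ω) (P : Matrix Ω Ω R) (f : ι → Ω → R) (lam : ι → R)
    (c : R) (horth : ∀ i j, ∑ y, c * f i y * f j y = if i = j then 1 else 0)
    (heig : ∀ i x, ∑ y, P x y * f i y = lam i * f i x) {i₁ : ι} (hf₁ : ∀ x, f i₁ x = 1)
    (hlam₁ : lam i₁ = 1) (t : ℕ) (x y : Ω) :
    (P ^ t) x y - c = c * ∑ i ∈ univ.erase i₁, f i x * f i y * lam i ^ t := by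
  rw [pow_apply_eq_sum_of_orthonormal_eigenvectors hcard P f lam c horth heig,
    ← add_sum_erase _ _ (mem_univ i₁), hf₁, hf₁, hlam₁]
  ring

end Spectral

section Transitive

variable {Ω : Type*} [Fintype Ω] [DecidableEq Ω]

theorem Matrix.submatrix_pow_equiv {R : Type*} [Semiring R] (P : Matrix Ω Ω R) (σ : Ω ≃ Ω)
    (t : ℕ) : (P ^ t).submatrix σ σ = P.submatrix σ σ ^ t :=
  map_pow (reindexRingEquiv R σ.symm) P t

theorem sum_pow_apply_eq_of_transitive {R β : Type*} [Semiring R] [AddCommMonoid β]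
    {P : Matrix Ω Ω R}
    (htrans : ∀ x x' : Ω, ∃ σ : Equiv.Perm Ω, σ x = x' ∧ ∀ a b, P (σ a) (σ b) = P a b)
    (φ : R → β) (t : ℕ) (x x' : Ω) : ∑ y, φ ((P ^ t) x y) = ∑ y, φ ((P ^ t) x' y) := by
  obtain ⟨σ, rfl, hσ⟩ := htrans x x'
  have hinv : (P ^ t).submatrix σ σ = P ^ t := by
    rw [submatrix_pow_equiv]
    congr 1
    ext a b
    exact hσ a b
  conv_lhs => rw [← hinv]
  exact Equiv.sum_comp σ fun y => φ ((P ^ t) (σ x) y)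

end Transitive

theorem Finset.sup'_univ_eq_inv_card_mul_sum {α : Type*} [Fintype α] [Nonempty α] {g : α → ℝ}
    (hg : ∀ x x', g x = g x') : univ.sup' univ_nonempty g = (Fintype.card α : ℝ)⁻¹ * ∑ x, g x := by
  obtain ⟨x₀⟩ := ‹Nonempty α›
  have hn : (Fintype.card α : ℝ) ≠ 0 := by positivity
  rw [show g = fun _ => g x₀ from funext fun x => hg x x₀, sup'_const, sum_const, card_univ,
    nsmul_eq_mul, inv_mul_cancel_left₀ hn]

theorem abs_sum_abs_sum_union_sub_le {α ι : Type*} [DecidableEq ι] (s : Finset α)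
    {I J : Finset ι} (hIJ : Disjoint I J) (g : ι → α → ℝ) :
    abs (∑ a ∈ s, |∑ i ∈ I ∪ J, g i a| - ∑ a ∈ s, |∑ i ∈ I, g i a|)
      ≤ ∑ i ∈ J, ∑ a ∈ s, |g i a| := by
  rw [← sum_sub_distrib, sum_comm (s := J)]
  refine (abs_sum_le_sum_abs _ _).trans (sum_le_sum fun a _ => ?_)
  calc abs (|∑ i ∈ I ∪ J, g i a| - |∑ i ∈ I, g i a|)
      ≤ |∑ i ∈ J, g i a| := by
        simpa [sum_union hIJ] using abs_abs_sub_abs_le_abs_sub (∑ i ∈ I ∪ J, g i a) (∑ i ∈ I, g i a)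
    _ ≤ ∑ i ∈ J, |g i a| := abs_sum_le_sum_abs _ _

theorem sum_sum_abs_mul_mul_le {Ω : Type*} [Fintype Ω] {g : Ω → ℝ}
    (hg : ∑ x, g x ^ 2 ≤ Fintype.card Ω) (a : ℝ) :
    ∑ x, ∑ y, |g x * g y * a| ≤ (Fintype.card Ω : ℝ) ^ 2 * |a| := by
  have hcs : (∑ x, |g x|) ^ 2 ≤ (Fintype.card Ω : ℝ) ^ 2 := by
    have := sq_sum_le_card_mul_sum_sq (s := univ) (f := fun x => |g x|)
    simp only [sq_abs, card_univ] at this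
    nlinarith
  simp only [abs_mul, ← sum_mul, ← mul_sum, ← sq]
  exact mul_le_mul_of_nonneg_right hcs (abs_nonneg a)

theorem tv_approx_transitive_general
    {Ω : Type*} [Fintype Ω] [DecidableEq Ω] [Nonempty Ω]
    (P : Matrix Ω Ω ℝ)
    (htrans : ∀ x x' : Ω, ∃ σ : Equiv.Perm Ω, σ x = x' ∧ ∀ a b, P (σ a) (σ b) = P a b)
    (f : Fin (Fintype.card Ω) → Ω → ℝ) (lam : Fin (Fintype.card Ω) → ℝ)
    (i₁ : Fin (Fintype.card Ω))
    (heig : ∀ i x, ∑ y, P x y * f i y = lam i * f i x)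
    (horth : ∀ i j, ∑ y, (Fintype.card Ω : ℝ)⁻¹ * f i y * f j y = if i = j then 1 else 0)
    (hf₁ : ∀ x, f i₁ x = 1) (hlam₁ : lam i₁ = 1)
    (t : ℕ) (I : Finset (Fin (Fintype.card Ω))) (hI : i₁ ∉ I) :
    abs ((univ.sup' univ_nonempty fun x : Ω =>
          (1/2) * ∑ y, |(P ^ t) x y - (Fintype.card Ω : ℝ)⁻¹|) -
        (1/2) * ((Fintype.card Ω : ℝ) ^ 2)⁻¹ *
          ∑ x, ∑ y, |∑ i ∈ I, f i x * f i y * lam i ^ t|)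
      ≤ (1/2) * ∑ i ∈ univ.filter (fun i => i ∉ I ∧ i ≠ i₁), |lam i| ^ t := by
  set n : ℝ := (Fintype.card Ω : ℝ)
  set J := univ.filter (fun i => i ∉ I ∧ i ≠ i₁)
  have hn : 0 < n := by positivity
  have hIJ : I ∪ J = univ.erase i₁ := by
    ext i
    by_cases i ∈ I <;> grind
  have hdisj : Disjoint I J := disjoint_left.mpr fun _ hiI hiJ => (mem_filter.mp hiJ).2.1 hiI
  have hdev : ∀ x y, (P ^ t) x y - n⁻¹ = n⁻¹ * ∑ i ∈ I ∪ J, f i x * f i y * lam i ^ t := by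
    rw [hIJ]
    exact pow_apply_sub_eq_sum_erase_of_orthonormal_eigenvectors (Fintype.card_fin _) P f lam _
      horth heig hf₁ hlam₁ t
  have hsup : (univ.sup' univ_nonempty fun x => (1/2) * ∑ y, |(P ^ t) x y - n⁻¹|)
      = (1/2) * (n ^ 2)⁻¹ * ∑ x, ∑ y, |∑ i ∈ I ∪ J, f i x * f i y * lam i ^ t| := by
    rw [sup'_univ_eq_inv_card_mul_sum fun x x' => by
      rw [sum_pow_apply_eq_of_transitive htrans (fun z => |z - n⁻¹|) t x x']]
    rw [show (Fintype.card Ω : ℝ)⁻¹ = n⁻¹ from rfl]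
    simp only [hdev, abs_mul, abs_inv, abs_of_pos hn, ← mul_sum]
    ring
  have hnorm : ∀ i, ∑ x, f i x ^ 2 = n := by
    intro i
    have h := horth i i
    rw [if_pos rfl] at h
    simp only [mul_assoc, ← mul_sum, ← sq] at h
    exact ((inv_mul_eq_one₀ hn.ne').mp h).symm
  rw [hsup, ← mul_sub, abs_mul, abs_of_nonneg (by positivity)]
  calc _ ≤ (1/2) * (n ^ 2)⁻¹ * ∑ i ∈ J, ∑ x, ∑ y, |f i x * f i y * lam i ^ t| := by
        gcongr
        simpa only [Fintype.sum_prod_type] using abs_sum_abs_sum_union_sub_le univ hdisj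
          fun i (p : Ω × Ω) => f i p.1 * f i p.2 * lam i ^ t
    _ ≤ (1/2) * (n ^ 2)⁻¹ * ∑ i ∈ J, n ^ 2 * |lam i| ^ t := by
        gcongr with i
        simpa [abs_pow] using sum_sum_abs_mul_mul_le (hnorm i).le (lam i ^ t)
    _ = _ := by
        rw [← mul_sum]
        field_simp

theorem tv_approx_transitive
    {Ω : Type*} [Fintype Ω] [DecidableEq Ω] [Nonempty Ω]
    (P : Matrix Ω Ω ℝ)
    (hP0 : ∀ x y, 0 ≤ P x y) (hP1 : ∀ x, ∑ y, P x y = 1)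
    (htrans : ∀ x x' : Ω, ∃ σ : Equiv.Perm Ω, σ x = x' ∧ ∀ a b, P (σ a) (σ b) = P a b)
    (hrev : ∀ x y, P x y = P y x)
    (f : Fin (Fintype.card Ω) → Ω → ℝ) (lam : Fin (Fintype.card Ω) → ℝ)
    (i₁ : Fin (Fintype.card Ω))
    (heig : ∀ i x, ∑ y, P x y * f i y = lam i * f i x)
    (horth : ∀ i j, ∑ y, (Fintype.card Ω : ℝ)⁻¹ * f i y * f j y = if i = j then 1 else 0)
    (hf₁ : ∀ x, f i₁ x = 1) (hlam₁ : lam i₁ = 1)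
    (t : ℕ) (I : Finset (Fin (Fintype.card Ω))) (hI : i₁ ∉ I) :
    abs ((univ.sup' univ_nonempty fun x : Ω =>
          (1/2) * ∑ y, |(P ^ t) x y - (Fintype.card Ω : ℝ)⁻¹|) -
        (1/2) * ((Fintype.card Ω : ℝ) ^ 2)⁻¹ *
          ∑ x, ∑ y, |∑ i ∈ I, f i x * f i y * lam i ^ t|)
      ≤ (1/2) * ∑ i ∈ univ.filter (fun i => i ∉ I ∧ i ≠ i₁), |lam i| ^ t :=
  tv_approx_transitive_general P htrans f lam i₁ heig horth hf₁ hlam₁ t I hI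
end

section
/- Let Ω be a finite nonempty set, P a row-stochastic matrix on Ω (P(x,y) ≥ 0 and Σ_y P(x,y) = 1 for all x) and π a probability distribution on Ω with π(x) > 0 for all x and π(x)P(x,y) = π(y)P(y,x) for all x,y. Suppose f_1, ..., f_{|Ω|} : Ω → ℝ and λ_1, ..., λ_{|Ω|} ∈ ℝ satisfy: Σ_y P(x,y) f_i(y) = λ_i f_i(x) for all i and x; Σ_y π(y) f_i(y) f_j(y) = 1 if i = j and 0 otherwise; f_1(x) = 1 for all x; and λ_1 = 1. Define the typical total variation distance d_typ(t) := Σ_{x∈Ω} π(x) · (1/2)·Σ_{y∈Ω} |P^t(x,y) − π(y)|. Then for every t ∈ ℕ and every subset I ⊆ {2, ..., |Ω|}: | d_typ(t) − (1/2)·Σ_{x,y∈Ω} π(x) π(y) |Σ_{i∈I} f_i(x) f_i(y) λ_i^t| | ≤ (1/2)·Σ_{i∈{2,...,|Ω|}\I} |λ_i|^t. -/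
/-!
The `|Ω|` functions `f i` are orthonormal in `ℓ²(π)`, so the square matrix `(f i x)` has a
one-sided and hence two-sided inverse; this gives the completeness relation
`∑ i, f i x * f i y * π y = δ x y`. Expanding `P ^ t` in this eigenbasis and splitting off the
stationary term `i₁` yields `P^t(x,y) - π(y) = π(y) ∑_{i ≠ i₁} f i x f i y λ_i^t`. Discarding
the indices outside `I` moves each absolute value by at most `∑ |f i x| |f i y| |λ_i|^t`, and
after integrating against `π ⊗ π` each term is bounded by `|λ_i|^t`, since Cauchy–Schwarz gives
`∑ x, π x * |f i x| ≤ 1`.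
-/

open Finset

theorem Finset.abs_abs_sum_sub_abs_sum_le_sum_sdiff {ι : Type*} [DecidableEq ι]
    {s t : Finset ι} (hst : s ⊆ t) (a : ι → ℝ) :
    |(|∑ i ∈ t, a i|) - (|∑ i ∈ s, a i|)| ≤ ∑ i ∈ t \ s, |a i| :=
  calc |(|∑ i ∈ t, a i|) - (|∑ i ∈ s, a i|)|
      ≤ |∑ i ∈ t, a i - ∑ i ∈ s, a i| := abs_abs_sub_abs_le_abs_sub _ _
    _ = |∑ i ∈ t \ s, a i| := by rw [← sum_sdiff hst, add_sub_cancel_right]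
    _ ≤ ∑ i ∈ t \ s, |a i| := abs_sum_le_sum_abs _ _

section

variable {Ω ι : Type*} [Fintype Ω]

theorem sq_sum_mul_abs_le {π : Ω → ℝ} (hπ : ∀ x, 0 ≤ π x) (g : Ω → ℝ) :
    (∑ x, π x * |g x|) ^ 2 ≤ (∑ x, π x) * ∑ x, π x * g x * g x :=
  sum_sq_le_sum_mul_sum_of_sq_le_mul _ (fun x _ => hπ x)
    (fun x _ => by rw [mul_assoc]; exact mul_nonneg (hπ x) (mul_self_nonneg _))
    (fun x _ => le_of_eq (by rw [mul_pow, sq_abs]; ring))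

theorem abs_sub_sum_sum_abs_sum_le [DecidableEq ι] {π : Ω → ℝ} (hπ : ∀ x, 0 ≤ π x)
    (g : ι → Ω → ℝ) (c : ι → ℝ) {s t : Finset ι} (hst : s ⊆ t) :
    |∑ x, ∑ y, π x * π y * |∑ i ∈ t, g i x * g i y * c i|
        - ∑ x, ∑ y, π x * π y * (|∑ i ∈ s, g i x * g i y * c i|)|
      ≤ ∑ i ∈ t \ s, |c i| * (∑ x, π x * |g i x|) ^ 2 := by
  have hππ x y : 0 ≤ π x * π y := mul_nonneg (hπ x) (hπ y)
  calc _ ≤ ∑ x, ∑ y, π x * π y * ∑ i ∈ t \ s, |g i x * g i y * c i| := by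
        simp_rw [← sum_sub_distrib, ← mul_sub]
        refine (abs_sum_le_sum_abs _ _).trans (sum_le_sum fun x _ => ?_)
        refine (abs_sum_le_sum_abs _ _).trans (sum_le_sum fun y _ => ?_)
        rw [abs_mul, abs_of_nonneg (hππ x y)]
        exact mul_le_mul_of_nonneg_left (abs_abs_sum_sub_abs_sum_le_sum_sdiff hst _) (hππ x y)
    _ = ∑ i ∈ t \ s, |c i| * (∑ x, π x * |g i x|) ^ 2 := by
        simp_rw [sq, sum_mul_sum, mul_sum, abs_mul]
        conv_rhs => rw [sum_comm]; enter [2, x]; rw [sum_comm]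
        refine sum_congr rfl fun x _ => sum_congr rfl fun y _ => sum_congr rfl fun i _ => ?_
        ring

end

section

open Matrix

variable {Ω ι : Type*} [Fintype Ω] [Fintype ι] [DecidableEq Ω] [DecidableEq ι]

theorem sum_mul_mul_eq_ite_of_orthonormal (hcard : Fintype.card ι = Fintype.card Ω)
    {π : Ω → ℝ} {f : ι → Ω → ℝ}
    (horth : ∀ i j, ∑ y, π y * f i y * f j y = if i = j then 1 else 0) (x z : Ω) :
    ∑ i, f i x * (f i z * π z) = if x = z then 1 else 0 := by
  set A : Matrix Ω ι ℝ := of fun x i => f i x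
  set B : Matrix ι Ω ℝ := of fun i y => f i y * π y
  have hBA : B * A = 1 := by
    ext i j
    rw [mul_apply, one_apply, ← horth]
    exact sum_congr rfl fun y _ => by simp only [A, B, of_apply]; ring
  have hAB : A * B = 1 :=
    (mul_eq_one_comm_of_equiv (Fintype.equivOfCardEq hcard).symm).mpr hBA
  simpa [A, B, mul_apply, one_apply] using congrFun (congrFun hAB x) z

theorem pow_mulVec_of_mulVec_eq_smul {P : Matrix Ω Ω ℝ} {v : Ω → ℝ} {c : ℝ}
    (h : P *ᵥ v = c • v) (s : ℕ) : (P ^ s) *ᵥ v = c ^ s • v := by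
  induction s with
  | zero => simp
  | succ s ih => rw [pow_succ, ← mulVec_mulVec, h, mulVec_smul, ih, smul_smul, pow_succ']

theorem pow_apply_eq_sum_of_orthonormal_eigenbasis (hcard : Fintype.card ι = Fintype.card Ω)
    {P : Matrix Ω Ω ℝ} {π : Ω → ℝ} {f : ι → Ω → ℝ} {lam : ι → ℝ}
    (horth : ∀ i j, ∑ y, π y * f i y * f j y = if i = j then 1 else 0)
    (heig : ∀ i, P *ᵥ f i = lam i • f i) (t : ℕ) (x y : Ω) :
    (P ^ t) x y = π y * ∑ i, f i x * f i y * lam i ^ t := by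
  have hpow i : ∑ z, (P ^ t) x z * f i z = lam i ^ t * f i x :=
    congrFun (pow_mulVec_of_mulVec_eq_smul (heig i) t) x
  calc (P ^ t) x y = ∑ z, (P ^ t) x z * ∑ i, f i z * (f i y * π y) := by
        simp only [sum_mul_mul_eq_ite_of_orthonormal hcard horth, mul_boole, sum_ite_eq',
          mem_univ, if_true]
    _ = π y * ∑ i, f i y * ∑ z, (P ^ t) x z * f i z := by
        simp_rw [mul_sum]
        rw [sum_comm]
        exact sum_congr rfl fun i _ => sum_congr rfl fun z _ => by ring
    _ = π y * ∑ i, f i x * f i y * lam i ^ t := by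
        simp_rw [hpow]
        exact congrArg _ (sum_congr rfl fun i _ => by ring)

end

theorem tv_approx_typical_general
    {Ω : Type*} [Fintype Ω] [DecidableEq Ω]
    (P : Matrix Ω Ω ℝ) (π : Ω → ℝ)
    (hπpos : ∀ x, 0 < π x) (hπ1 : ∑ x, π x = 1)
    (f : Fin (Fintype.card Ω) → Ω → ℝ) (lam : Fin (Fintype.card Ω) → ℝ)
    (i₁ : Fin (Fintype.card Ω))
    (heig : ∀ i x, ∑ y, P x y * f i y = lam i * f i x)
    (horth : ∀ i j, ∑ y, π y * f i y * f j y = if i = j then 1 else 0)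
    (hf₁ : ∀ x, f i₁ x = 1) (hlam₁ : lam i₁ = 1)
    (t : ℕ) (I : Finset (Fin (Fintype.card Ω))) (hI : i₁ ∉ I) :
    abs ((∑ x, π x * ((1/2) * ∑ y, |(P ^ t) x y - π y|)) -
        (1/2) * ∑ x, ∑ y, π x * π y * |∑ i ∈ I, f i x * f i y * lam i ^ t|)
      ≤ (1/2) * ∑ i ∈ univ.filter (fun i => i ∉ I ∧ i ≠ i₁), |lam i| ^ t := by
  set K := univ.erase i₁
  have hπ x : 0 ≤ π x := (hπpos x).le
  have hIK : I ⊆ K := fun i hi => mem_erase.2 ⟨ne_of_mem_of_not_mem hi hI, mem_univ i⟩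
  have hKI : K \ I = univ.filter (fun i => i ∉ I ∧ i ≠ i₁) := by ext i; simp [K, and_comm]
  have hdev x y : (P ^ t) x y - π y = π y * ∑ i ∈ K, f i x * f i y * lam i ^ t := by
    rw [pow_apply_eq_sum_of_orthonormal_eigenbasis (Fintype.card_fin _) horth
      (fun i => funext (heig i)), ← add_sum_erase _ _ (mem_univ i₁), hf₁ x, hf₁ y, hlam₁]
    ring
  have htyp : ∑ x, π x * ((1/2) * ∑ y, |(P ^ t) x y - π y|)
      = (1/2) * ∑ x, ∑ y, π x * π y * |∑ i ∈ K, f i x * f i y * lam i ^ t| := by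
    simp_rw [hdev, abs_mul, abs_of_nonneg (hπ _), mul_sum]
    exact sum_congr rfl fun x _ => sum_congr rfl fun y _ => by ring
  have hnorm i : (∑ x, π x * |f i x|) ^ 2 ≤ 1 := by
    simpa [hπ1, horth] using sq_sum_mul_abs_le hπ (f i)
  rw [htyp, ← mul_sub, abs_mul, abs_of_pos one_half_pos, ← hKI]
  gcongr
  calc _ ≤ _ := abs_sub_sum_sum_abs_sum_le hπ f (fun i => lam i ^ t) hIK
    _ ≤ _ := sum_le_sum fun i _ => by
      rw [abs_pow]; exact mul_le_of_le_one_right (by positivity) (hnorm i)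

theorem tv_approx_typical
    {Ω : Type*} [Fintype Ω] [DecidableEq Ω] [Nonempty Ω]
    (P : Matrix Ω Ω ℝ) (π : Ω → ℝ)
    (hP0 : ∀ x y, 0 ≤ P x y) (hP1 : ∀ x, ∑ y, P x y = 1)
    (hπpos : ∀ x, 0 < π x) (hπ1 : ∑ x, π x = 1)
    (hrev : ∀ x y, π x * P x y = π y * P y x)
    (f : Fin (Fintype.card Ω) → Ω → ℝ) (lam : Fin (Fintype.card Ω) → ℝ)
    (i₁ : Fin (Fintype.card Ω))
    (heig : ∀ i x, ∑ y, P x y * f i y = lam i * f i x)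
    (horth : ∀ i j, ∑ y, π y * f i y * f j y = if i = j then 1 else 0)
    (hf₁ : ∀ x, f i₁ x = 1) (hlam₁ : lam i₁ = 1)
    (t : ℕ) (I : Finset (Fin (Fintype.card Ω))) (hI : i₁ ∉ I) :
    abs ((∑ x, π x * ((1/2) * ∑ y, |(P ^ t) x y - π y|)) -
        (1/2) * ∑ x, ∑ y, π x * π y * |∑ i ∈ I, f i x * f i y * lam i ^ t|)
      ≤ (1/2) * ∑ i ∈ univ.filter (fun i => i ∉ I ∧ i ≠ i₁), |lam i| ^ t :=
  tv_approx_typical_general P π hπpos hπ1 f lam i₁ heig horth hf₁ hlam₁ t I hI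
end

section
/- Let G be a finite group and μ : G → ℝ a probability distribution (μ(g) ≥ 0, Σ_g μ(g) = 1) which is conjugacy-invariant: μ(h⁻¹gh) = μ(g) for all g, h ∈ G. Let ι be a finite index type and (ρ_i, V_i)_{i∈ι} a family of finite-dimensional complex representations of G such that each V_i is irreducible, V_i and V_j are not isomorphic as representations of G for i ≠ j, and every irreducible finite-dimensional complex representation of G is isomorphic to some V_i; let i₀ ∈ ι index the trivial one-dimensional representation. Write d_i := dim V_i, χ_i(g) := tr(ρ_i(g)), and s_i := d_i^{−1}·Σ_{g∈G} μ(g) χ_i(g). Then for every t ∈ ℕ and every subset I ⊆ ι \ {i₀}: | (1/2)·Σ_{g∈G} |μ^{*t}(g) − 1/|G|| − (1/2)·|G|^{−1}·Σ_{g∈G} |Σ_{i∈I} d_i s_i^t χ_i(g⁻¹)| | ≤ (1/2)·Σ_{i∈ι\(I∪{i₀})} d_i |s_i|^t, where |·| applied to complex numbers denotes the complex absolute value. -/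
open Finset

/-- Convolution of two complex-valued functions on a finite group. -/
noncomputable def groupConv {G : Type*} [Group G] [Fintype G] (μ ν : G → ℂ) : G → ℂ :=
  fun g => ∑ h, μ (g * h⁻¹) * ν h

/-- `t`-fold self-convolution, with the point mass at the identity for `t = 0`. -/
noncomputable def groupConvPow {G : Type*} [Group G] [Fintype G] [DecidableEq G]
    (μ : G → ℂ) : ℕ → G → ℂ
  | 0 => fun g => if g = 1 then 1 else 0
  | t + 1 => groupConv μ (groupConvPow μ t)

/-!
Since `μ` is a class function, Schur's lemma makes `∑ h, μ h • ρ i h` act on `V i` as the scalar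
`s i`, so each convolution step multiplies the `i`-th term of the character expansion by `s i`.
Starting from column orthogonality `∑ i, d i * χ i g = |G| * [g = 1]` (the regular representation
contains `V i` exactly `d i` times), this gives `μ^{*t} g = |G|⁻¹ * ∑ i, d i * s i ^ t * χ i g⁻¹`,
whose `i₀`-term is `|G|⁻¹`. By the reverse triangle inequality the difference in question is at
most `(1/2) * |G|⁻¹ * ∑ g, |∑ i ∉ I ∪ {i₀}, d i * s i ^ t * χ i g⁻¹|`, and `∑ g, |χ i g| ≤ |G|`
by Cauchy–Schwarz and `⟨χ i, χ i⟩ = 1`, where `χ i g⁻¹ = conj (χ i g)` since `ρ i g` has finite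
order.
-/

open Module LinearMap

namespace Module.End

variable {K V : Type*} [Field K] [AddCommGroup V] [Module K V]

theorem HasEigenvalue.pow_eq_one {f : End K V} {μ : K} (hμ : f.HasEigenvalue μ) {n : ℕ}
    (hf : f ^ n = 1) : μ ^ n = 1 := by
  obtain ⟨v, hv⟩ := (hμ.pow n).exists_hasEigenvector
  have hv1 := hv.apply_eq_smul
  rw [hf, one_apply] at hv1
  exact (smul_left_injective K hv.2 (by simp only [← hv1, one_smul])).symm

variable [FiniteDimensional K V]

theorem trace_restrict_maxGenEigenspace (f : End K V) (μ : K) :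
    trace K _ (f.restrict (f.mapsTo_maxGenEigenspace_of_comm (Commute.refl f) μ)) =
      μ * finrank K (f.maxGenEigenspace μ) := by
  have h := trace_comp_eq_mul_of_commute_of_isNilpotent (f := 1)
    (g := f.restrict (f.mapsTo_maxGenEigenspace_of_comm (Commute.refl f) μ)) μ
    (Commute.one_left _) (f.isNilpotent_restrict_maxGenEigenspace_sub_algebraMap μ)
  rwa [← mul_eq_comp, one_mul, trace_one] at h

theorem trace_restrict_maxGenEigenspace_of_mul_eq_one {f g : End K V} (hgf : g * f = 1)
    (hfg : Commute f g) {μ : K} (hμ : μ ≠ 0) :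
    trace K _ (g.restrict (f.mapsTo_maxGenEigenspace_of_comm hfg μ)) =
      μ⁻¹ * finrank K (f.maxGenEigenspace μ) := by
  have hf := f.mapsTo_maxGenEigenspace_of_comm (Commute.refl f) μ
  have hg := f.mapsTo_maxGenEigenspace_of_comm hfg μ
  have h := trace_comp_eq_mul_of_commute_of_isNilpotent μ (restrict_commute hfg.symm hg hf)
    (f.isNilpotent_restrict_maxGenEigenspace_sub_algebraMap μ)
  have hone : g.restrict hg ∘ₗ f.restrict hf = 1 :=
    LinearMap.ext fun x ↦ Subtype.ext congr($hgf x.1)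
  rw [hone, trace_one] at h
  rw [h, inv_mul_cancel_left₀ hμ]

end Module.End

/-- On the generalized `μ`-eigenspace of `A`, the traces of `A` and `A⁻¹` are `μ` and `μ⁻¹` times
its dimension, and `μ⁻¹ = conj μ` because `μ` is a root of unity. -/
theorem LinearMap.trace_inv_eq_conj_trace {V : Type*} [AddCommGroup V] [Module ℂ V]
    [FiniteDimensional ℂ V] {A : (End ℂ V)ˣ} (hA : IsOfFinOrder A) :
    trace ℂ V ↑A⁻¹ = starRingEnd ℂ (trace ℂ V ↑A) := by
  classical
  obtain ⟨n, hn, hAn⟩ := isOfFinOrder_iff_pow_eq_one.mp hA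
  have hindep := (A : End ℂ V).independent_maxGenEigenspace
  have hds := DirectSum.isInternal_submodule_of_iSupIndep_of_iSup_eq_top hindep
    (A : End ℂ V).iSup_maxGenEigenspace_eq_top
  have hfin := WellFoundedGT.finite_ne_bot_of_iSupIndep hindep
  have hcomm : Commute (A : End ℂ V) ↑A⁻¹ := Units.commute_coe_inv A
  rw [trace_eq_sum_trace_restrict' hds hfin ((A : End ℂ V).mapsTo_maxGenEigenspace_of_comm hcomm),
    trace_eq_sum_trace_restrict' hds hfin
      ((A : End ℂ V).mapsTo_maxGenEigenspace_of_comm (Commute.refl _)), map_sum]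
  refine sum_congr rfl fun μ hE ↦ ?_
  have hμ : (A : End ℂ V).HasEigenvalue μ := by
    rw [Set.Finite.mem_toFinset, Set.mem_ofPred_eq,
      End.maxGenEigenspace_eq_genEigenspace_finrank] at hE
    exact End.hasEigenvalue_of_hasGenEigenvalue hE
  have hμn : μ ^ n = 1 := hμ.pow_eq_one (by rw [← Units.val_pow_eq_pow_val, hAn, Units.val_one])
  have hμ1 : ‖μ‖ = 1 := Complex.norm_eq_one_of_pow_eq_one hμn hn.ne'
  rw [End.trace_restrict_maxGenEigenspace, End.trace_restrict_maxGenEigenspace_of_mul_eq_one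
    (Units.inv_mul A) hcomm (norm_ne_zero_iff.mp (hμ1.trans_ne one_ne_zero)), map_mul,
    map_natCast, Complex.inv_eq_conj hμ1]

theorem LinearMap.trace_eq_trace_restrict_add_trace_restrict {K M : Type*} [Field K]
    [AddCommGroup M] [Module K M] [FiniteDimensional K M] {p q : Submodule K M} (h : IsCompl p q)
    {f : End K M} (hp : Set.MapsTo f p p) (hq : Set.MapsTo f q q) :
    trace K M f = trace K p (f.restrict hp) + trace K q (f.restrict hq) := by
  let e := Submodule.prodEquivOfIsCompl p q h
  have he : f ∘ₗ e = e ∘ₗ (f.restrict hp).prodMap (f.restrict hq) := by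
    ext x <;> simp [e] <;> rfl
  rw [← trace_prodMap', ← trace_conj' _ e, LinearEquiv.conj_apply, ← he, comp_assoc,
    LinearEquiv.comp_coe, LinearEquiv.symm_trans_self, LinearEquiv.refl_toLinearMap, comp_id]

theorem Finset.sum_univ_erase_eq_add_sum_filter {ι M : Type*} [Fintype ι] [DecidableEq ι]
    [AddCommMonoid M] {I : Finset ι} {a : ι} (ha : a ∉ I) (f : ι → M) :
    ∑ i ∈ univ.erase a, f i = ∑ i ∈ I, f i + ∑ i ∈ univ.filter (fun i ↦ i ∉ I ∧ i ≠ a), f i := by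
  rw [← sum_union (disjoint_left.mpr fun i hi hj ↦ (mem_filter.mp hj).2.1 hi)]
  congr 1
  ext i
  by_cases hi : i ∈ I
  · simp [hi, ne_of_mem_of_not_mem hi ha]
  · simp [hi]

theorem Finset.abs_sum_norm_add_sub_sum_norm_le {α E : Type*} [SeminormedAddCommGroup E]
    (s : Finset α) (f g : α → E) :
    |∑ x ∈ s, ‖f x + g x‖ - ∑ x ∈ s, ‖f x‖| ≤ ∑ x ∈ s, ‖g x‖ := by
  rw [← sum_sub_distrib]
  refine (abs_sum_le_sum_abs _ _).trans (sum_le_sum fun x _ ↦ ?_)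
  simpa using abs_norm_sub_norm_le (f x + g x) (f x)

namespace Representation

section Field

variable {k G V W : Type*} [Field k] [Group G] [AddCommGroup V] [Module k V]
  [AddCommGroup W] [Module k W] {ρ : Representation k G V} {σ : Representation k G W}

theorem isIrreducible_iff [Nontrivial V] : ρ.IsIrreducible ↔
    ∀ U : Submodule k V, (∀ g v, v ∈ U → ρ g v ∈ U) → U = ⊥ ∨ U = ⊤ := by
  refine ⟨fun h U hU ↦ ?_, fun h ↦ ?_⟩
  · exact (eq_bot_or_eq_top (⟨U, hU⟩ : Subrepresentation ρ)).imp
      (congrArg Subrepresentation.toSubmodule) (congrArg Subrepresentation.toSubmodule)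
  · have : Nontrivial (Subrepresentation ρ) :=
      ⟨⊥, ⊤, fun h ↦ bot_ne_top (congrArg Subrepresentation.toSubmodule h)⟩
    exact ⟨fun p ↦ (h p.toSubmodule p.apply_mem_toSubmodule).imp Subrepresentation.ext
      Subrepresentation.ext⟩

theorem IsIrreducible.nontrivial [ρ.IsIrreducible] : Nontrivial V :=
  IsSimpleModule.nontrivial (MonoidAlgebra k G) ρ.asModule

theorem IsIrreducible.of_equiv [ρ.IsIrreducible] (φ : ρ.Equiv σ) : σ.IsIrreducible := by
  rw [irreducible_iff_isSimpleModule_asModule] at *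
  exact IsSimpleModule.congr (LinearEquiv.ofLinearMap
    (IntertwiningMap.equivLinearMapAsModule σ ρ φ.symm.toIntertwiningMap)
    (IntertwiningMap.equivLinearMapAsModule ρ σ φ.toIntertwiningMap)
    (LinearMap.ext φ.symm_apply_apply) (LinearMap.ext φ.apply_symm_apply))

theorem _root_.Subrepresentation.isCompl_toSubmodule {p q : Subrepresentation ρ}
    (h : IsCompl p q) : IsCompl p.toSubmodule q.toSubmodule :=
  ⟨disjoint_iff.mpr (congrArg Subrepresentation.toSubmodule h.inf_eq_bot),
    codisjoint_iff.mpr (congrArg Subrepresentation.toSubmodule h.sup_eq_top)⟩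

theorem character_eq_add_of_isCompl [FiniteDimensional k V] {p q : Subrepresentation ρ}
    (h : IsCompl p q) :
    ρ.character = p.toRepresentation.character + q.toRepresentation.character := by
  ext g
  exact trace_eq_trace_restrict_add_trace_restrict (Subrepresentation.isCompl_toSubmodule h)
    (p.apply_mem_toSubmodule g) (q.apply_mem_toSubmodule g)

theorem character_leftRegular [Fintype G] [DecidableEq G] (g : G) :
    (leftRegular k G).character g = if g = 1 then (Fintype.card G : k) else 0 := by
  rw [character, trace_eq_matrix_trace k (MonoidAlgebra.basis G k), Matrix.trace]
  simp [LinearMap.toMatrix_apply, MonoidAlgebra.basis, Finsupp.single_apply]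

end Field

section FourierScalar

variable {k G V : Type*} [Field k] [Group G] [Fintype G] [AddCommGroup V] [Module k V]
  [FiniteDimensional k V] (ρ : Representation k G V)

/-- The paper's `s_i`: the scalar by which `∑ h, ν h • ρ h` acts when `ν` is a class function and
`ρ` is irreducible (`sum_smul_eq_fourierScalar_smul_one`). -/
noncomputable def fourierScalar (ν : G → k) : k :=
  (finrank k V : k)⁻¹ * ∑ h, ν h * ρ.character h

variable [IsAlgClosed k] [CharZero k] [ρ.IsIrreducible] {ν : G → k}
  (hν : ∀ g h, ν (h⁻¹ * g * h) = ν g)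
include hν

theorem sum_smul_eq_fourierScalar_smul_one : ∑ h, ν h • ρ h = ρ.fourierScalar ν • 1 := by
  set T := ∑ h, ν h • ρ h
  have hT : ∀ g v, T (ρ g v) = ρ g (T v) := fun g v ↦ by
    simp only [T, LinearMap.sum_apply, LinearMap.smul_apply, map_sum, map_smul,
      ← Module.End.mul_apply, ← map_mul]
    exact Fintype.sum_bijective _ (MulAut.conj g⁻¹).bijective _ _ fun h ↦ by
      rw [MulAut.conj_apply, inv_inv, hν, ← mul_assoc, ← mul_assoc, mul_inv_cancel, one_mul]
  obtain ⟨c, hc⟩ := IsIrreducible.algebraMap_intertwiningMap_bijective_of_isAlgClosed.2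
    (T.intertwiningMap_of_isIntertwiningMap ρ ρ hT)
  have hTc : T = c • 1 := congrArg IntertwiningMap.toLinearMap hc.symm
  have := IsIrreducible.nontrivial (ρ := ρ)
  have hd : (finrank k V : k) ≠ 0 := by simp [finrank_pos.ne']
  have htr := congrArg (trace k V) hTc
  simp only [T, map_sum, map_smul, smul_eq_mul, trace_one] at htr
  rw [hTc, fourierScalar, show ∑ h, ν h * ρ.character h = finrank k V * c from
    htr.trans (mul_comm _ _), inv_mul_cancel_left₀ hd]

theorem sum_mul_character_inv_eq (g : G) :
    ∑ h, ν (g * h⁻¹) * ρ.character h⁻¹ = ρ.fourierScalar ν * ρ.character g⁻¹ := by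
  have hsum : ∑ h, ν (g * h⁻¹) * ρ.character h⁻¹ = ∑ x, ν x * ρ.character (g⁻¹ * x) :=
    Fintype.sum_equiv ((Equiv.inv G).trans (Equiv.mulLeft g)) _ _ fun h ↦ by simp
  have h := congrArg (fun T ↦ trace k V (ρ g⁻¹ * T)) (ρ.sum_smul_eq_fourierScalar_smul_one hν)
  simp only [mul_sum, mul_smul_comm, map_sum, map_smul, smul_eq_mul, mul_one] at h
  rw [hsum]
  simpa only [character, map_mul] using h

end FourierScalar

section Complex

variable {G V : Type*} [Group G] [AddCommGroup V] [Module ℂ V] [FiniteDimensional ℂ V]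
  (ρ : Representation ℂ G V)

theorem character_inv_eq_conj [Finite G] (g : G) :
    ρ.character g⁻¹ = starRingEnd ℂ (ρ.character g) := by
  have h := trace_inv_eq_conj_trace (ρ.asGroupHom.isOfFinOrder (isOfFinOrder_of_finite g))
  rwa [← map_inv, asGroupHom_apply, asGroupHom_apply] at h

theorem sum_norm_character_le_card [Fintype G] [ρ.IsIrreducible] :
    ∑ g, ‖ρ.character g‖ ≤ Fintype.card G := by
  have : Invertible (Nat.card G : ℂ) := invertibleOfNonzero (by simp [Nat.card_eq_fintype_card])
  have horth := char_orthonormal ρ ρ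
  have hsq : ∑ g, ‖ρ.character g‖ ^ 2 = Fintype.card G := by
    rw [if_pos ⟨.refl ρ⟩, inv_mul_eq_iff_eq_mul₀ (Invertible.ne_zero _), mul_one] at horth
    simp only [character_inv_eq_conj, Complex.mul_conj', Nat.card_eq_fintype_card] at horth
    exact_mod_cast horth
  have hcs := sq_sum_le_card_mul_sum_sq (s := univ) (f := fun g ↦ ‖ρ.character g‖)
  rw [hsq, card_univ] at hcs
  nlinarith [sum_nonneg fun g (_ : g ∈ univ) ↦ norm_nonneg (ρ.character g)]

end Complex

/-- Completeness is only tested on carriers in `Type`; `exists_character_eq` transports a carrier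
in any universe there. -/
structure IsCompleteIrreducibleFamily {k : Type} [Field k] {G ι : Type*} [Group G] {V : ι → Type}
    [∀ i, AddCommGroup (V i)] [∀ i, Module k (V i)] (ρ : ∀ i, Representation k G (V i)) :
    Prop where
  isIrreducible : ∀ i, (ρ i).IsIrreducible
  eq_of_equiv : ∀ i j, Nonempty ((ρ i).Equiv (ρ j)) → i = j
  exists_equiv : ∀ (W : Type) [AddCommGroup W] [Module k W] [FiniteDimensional k W]
    (τ : Representation k G W), τ.IsIrreducible → ∃ i, Nonempty (τ.Equiv (ρ i))

theorem isCompleteIrreducibleFamily_of_forall_submodule {G ι : Type*} [Group G] {V : ι → Type}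
    [∀ i, AddCommGroup (V i)] [∀ i, Module ℂ (V i)] [∀ i, Nontrivial (V i)]
    (ρ : ∀ i, Representation ℂ G (V i))
    (hirr : ∀ i (U : Submodule ℂ (V i)), (∀ g v, v ∈ U → ρ i g v ∈ U) → U = ⊥ ∨ U = ⊤)
    (hnoniso : ∀ i j, i ≠ j → ¬ ∃ e : V i ≃ₗ[ℂ] V j, ∀ g v, e (ρ i g v) = ρ j g (e v))
    (hcomplete : ∀ (W : Type) (_ : AddCommGroup W) (_ : Module ℂ W)
      (_ : FiniteDimensional ℂ W) (_ : Nontrivial W) (τ : Representation ℂ G W),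
      (∀ U : Submodule ℂ W, (∀ g v, v ∈ U → τ g v ∈ U) → U = ⊥ ∨ U = ⊤) →
      ∃ i, ∃ e : W ≃ₗ[ℂ] V i, ∀ g v, e (τ g v) = ρ i g (e v)) :
    IsCompleteIrreducibleFamily ρ where
  isIrreducible i := isIrreducible_iff.mpr (hirr i)
  eq_of_equiv i j := fun ⟨φ⟩ ↦ by_contra fun hij ↦
    hnoniso i j hij ⟨φ.toLinearEquiv, φ.toIntertwiningMap.isIntertwining⟩
  exists_equiv W _ _ _ τ hτ := by
    have := hτ.nontrivial
    obtain ⟨i, e, he⟩ := hcomplete W _ _ inferInstance this τ (isIrreducible_iff.mp hτ)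
    exact ⟨i, ⟨.mk e fun g ↦ LinearMap.ext (he g)⟩⟩

namespace IsCompleteIrreducibleFamily

section Field

variable {k : Type} [Field k] {G ι : Type*} [Group G] {V : ι → Type} [∀ i, AddCommGroup (V i)]
  [∀ i, Module k (V i)] {ρ : ∀ i, Representation k G (V i)} (hρ : IsCompleteIrreducibleFamily ρ)
include hρ

theorem exists_character_eq {W : Type*} [AddCommGroup W] [Module k W] [FiniteDimensional k W]
    (σ : Representation k G W) [σ.IsIrreducible] : ∃ i, σ.character = (ρ i).character := by
  let e := (finBasis k W).equivFun
  let τ : Representation k G (Fin (finrank k W) → k) :=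
    (e.conjAlgEquiv k).toAlgHom.toMonoidHom.comp σ
  let φ : σ.Equiv τ := .mk e fun g ↦ by ext; simp [τ]
  obtain ⟨i, ⟨ψ⟩⟩ := hρ.exists_equiv _ τ (IsIrreducible.of_equiv φ)
  exact ⟨i, char_iso (φ.trans ψ)⟩

/-- By Maschke's theorem, a reducible representation splits off a proper subrepresentation with an
invariant complement, and characters add. -/
theorem exists_character_eq_sum [Fintype ι] [Finite G] [NeZero (Nat.card G : k)]
    {W : Type*} [AddCommGroup W] [Module k W] [FiniteDimensional k W]
    (σ : Representation k G W) : ∃ c : ι → ℕ, σ.character = ∑ i, c i • (ρ i).character := by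
  induction hd : finrank k W using Nat.strong_induction_on generalizing W with
  | _ d ih =>
  rcases subsingleton_or_nontrivial W with hW | hW
  · exact ⟨0, funext fun g ↦ by simp [character, Subsingleton.elim (σ g) 0]⟩
  by_cases hσ : σ.IsIrreducible
  · obtain ⟨i, hi⟩ := hρ.exists_character_eq σ
    classical
    exact ⟨Pi.single i 1, by simp [hi, Pi.single_apply]⟩
  have : Nontrivial (Subrepresentation σ) :=
    ⟨⊥, ⊤, fun h ↦ bot_ne_top (congrArg Subrepresentation.toSubmodule h)⟩
  obtain ⟨p, hp_bot, hp_top⟩ : ∃ p : Subrepresentation σ, p ≠ ⊥ ∧ p ≠ ⊤ := by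
    by_contra! h
    exact hσ (IsSimpleOrder.of_forall_eq_top h)
  obtain ⟨q, hpq⟩ := exists_isCompl p
  have hq_bot : q ≠ ⊥ := fun h ↦ hp_top (eq_top_of_isCompl_bot (h ▸ hpq))
  have hdim := Submodule.finrank_add_eq_of_isCompl (Subrepresentation.isCompl_toSubmodule hpq)
  have hp0 : finrank k p.toSubmodule ≠ 0 := fun h ↦
    hp_bot (Subrepresentation.ext (Submodule.finrank_eq_zero.mp h))
  have hq0 : finrank k q.toSubmodule ≠ 0 := fun h ↦
    hq_bot (Subrepresentation.ext (Submodule.finrank_eq_zero.mp h))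
  obtain ⟨a, ha⟩ := ih _ (by omega) p.toRepresentation rfl
  obtain ⟨b, hb⟩ := ih _ (by omega) q.toRepresentation rfl
  exact ⟨a + b, by simp [character_eq_add_of_isCompl hpq, ha, hb, add_smul, sum_add_distrib]⟩

variable [∀ i, FiniteDimensional k (V i)] [Fintype G] [CharZero k] [IsAlgClosed k]

theorem sum_character_mul_character_inv [DecidableEq ι] (i j : ι) :
    ∑ g, (ρ i).character g * (ρ j).character g⁻¹ = if i = j then (Fintype.card G : k) else 0 := by
  have hG : (Nat.card G : k) ≠ 0 := by simp [Nat.card_eq_fintype_card]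
  have : Invertible (Nat.card G : k) := invertibleOfNonzero hG
  have := hρ.isIrreducible i
  have := hρ.isIrreducible j
  have h := char_orthonormal (ρ i) (ρ j)
  have hij : Nonempty ((ρ j).Equiv (ρ i)) ↔ i = j :=
    ⟨fun ⟨φ⟩ ↦ (hρ.eq_of_equiv j i ⟨φ⟩).symm, fun h ↦ h ▸ ⟨.refl _⟩⟩
  rw [inv_mul_eq_iff_eq_mul₀ hG] at h
  classical
  simp only [h, hij, Nat.card_eq_fintype_card]
  split_ifs <;> simp

/-- Pairing the regular character with `χ j` gives its multiplicity `c j` by orthogonality, and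
`χ j 1 = d j` because the regular character is supported at `1`. -/
theorem sum_finrank_mul_character [Fintype ι] [DecidableEq G] (g : G) :
    ∑ i, (finrank k (V i) : k) * (ρ i).character g =
      if g = 1 then (Fintype.card G : k) else 0 := by
  classical
  obtain ⟨c, hc⟩ := hρ.exists_character_eq_sum (leftRegular k G)
  have hG : (Fintype.card G : k) ≠ 0 := by simp
  have hcj : ∀ j, (c j : k) = finrank k (V j) := fun j ↦ by
    have h := congrArg (fun χ ↦ ∑ g, χ g * (ρ j).character g⁻¹) hc
    simp only [character_leftRegular, ite_mul, zero_mul, sum_ite_eq', mem_univ, if_true, inv_one,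
      char_one, Finset.sum_apply, nsmul_eq_mul, Pi.mul_apply, Pi.natCast_apply, sum_mul,
      mul_assoc] at h
    rw [sum_comm] at h
    simp only [← mul_sum, hρ.sum_character_mul_character_inv, mul_ite, mul_zero, sum_ite_eq',
      mem_univ, if_true] at h
    exact (mul_left_injective₀ hG) (h.symm.trans (mul_comm _ _))
  simp only [← hcj, ← character_leftRegular, hc, Finset.sum_apply, nsmul_eq_mul, Pi.mul_apply,
    Pi.natCast_apply]

end Field

section Complex

variable {G ι : Type*} [Group G] [Fintype G] {V : ι → Type} [∀ i, AddCommGroup (V i)]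
  [∀ i, Module ℂ (V i)] [∀ i, FiniteDimensional ℂ (V i)] {ρ : ∀ i, Representation ℂ G (V i)}
  (hρ : IsCompleteIrreducibleFamily ρ)
include hρ

theorem sum_norm_sum_mul_character_inv_le (J : Finset ι) (a : ι → ℂ) :
    ∑ g, ‖∑ i ∈ J, a i * (ρ i).character g⁻¹‖ ≤ Fintype.card G * ∑ i ∈ J, ‖a i‖ := by
  have := hρ.isIrreducible
  calc ∑ g, ‖∑ i ∈ J, a i * (ρ i).character g⁻¹‖
      ≤ ∑ g, ∑ i ∈ J, ‖a i‖ * ‖(ρ i).character g⁻¹‖ :=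
        sum_le_sum fun g _ ↦ (norm_sum_le _ _).trans_eq (by simp only [norm_mul])
    _ = ∑ i ∈ J, ‖a i‖ * ∑ g, ‖(ρ i).character g‖ := by
        rw [sum_comm]
        exact sum_congr rfl fun i _ ↦ by
          rw [← mul_sum, Fintype.sum_equiv (Equiv.inv G) (fun g ↦ ‖(ρ i).character g⁻¹‖)
            (fun g ↦ ‖(ρ i).character g‖) fun _ ↦ rfl]
    _ ≤ ∑ i ∈ J, ‖a i‖ * Fintype.card G :=
        sum_le_sum fun i _ ↦ mul_le_mul_of_nonneg_left ((ρ i).sum_norm_character_le_card)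
          (norm_nonneg _)
    _ = Fintype.card G * ∑ i ∈ J, ‖a i‖ := by rw [← sum_mul, mul_comm]

variable [Fintype ι] [DecidableEq G] {ν : G → ℂ} (hν : ∀ g h, ν (h⁻¹ * g * h) = ν g)
include hν

theorem groupConvPow_eq_sum (t : ℕ) (g : G) :
    groupConvPow ν t g = (Fintype.card G : ℂ)⁻¹ *
      ∑ i, (finrank ℂ (V i) : ℂ) * (ρ i).fourierScalar ν ^ t * (ρ i).character g⁻¹ := by
  have := hρ.isIrreducible
  induction t generalizing g with
  | zero =>
    simp only [pow_zero, mul_one, hρ.sum_finrank_mul_character, inv_eq_one]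
    split_ifs with hg <;> simp [groupConvPow, hg]
  | succ t ih =>
    calc groupConvPow ν (t + 1) g = ∑ h, ν (g * h⁻¹) * groupConvPow ν t h := rfl
      _ = (Fintype.card G : ℂ)⁻¹ * ∑ i, (finrank ℂ (V i) : ℂ) * (ρ i).fourierScalar ν ^ t *
            ∑ h, ν (g * h⁻¹) * (ρ i).character h⁻¹ := by
        simp only [ih, mul_sum, sum_comm (γ := G)]
        exact sum_congr rfl fun i _ ↦ sum_congr rfl fun h _ ↦ by ring
      _ = _ := by simp only [(ρ _).sum_mul_character_inv_eq hν, pow_succ, mul_assoc]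

theorem groupConvPow_sub_inv_card [DecidableEq ι] (hν1 : ∑ g, ν g = 1) {i₀ : ι}
    (hi₀ : ∀ g, ρ i₀ g = LinearMap.id) (hd₀ : finrank ℂ (V i₀) = 1) (t : ℕ) (g : G) :
    groupConvPow ν t g - (Fintype.card G : ℂ)⁻¹ = (Fintype.card G : ℂ)⁻¹ *
      ∑ i ∈ univ.erase i₀, (finrank ℂ (V i) : ℂ) * (ρ i).fourierScalar ν ^ t *
        (ρ i).character g⁻¹ := by
  have hχ₀ : ∀ g, (ρ i₀).character g = 1 := fun g ↦ by
    rw [character, hi₀, trace_id, hd₀, Nat.cast_one]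
  have hs₀ : (ρ i₀).fourierScalar ν = 1 := by
    simp only [fourierScalar, hχ₀, hd₀, mul_one, Nat.cast_one, inv_one, hν1]
  rw [hρ.groupConvPow_eq_sum hν, ← sum_erase_add _ _ (mem_univ i₀), hs₀, hχ₀, hd₀, mul_add]
  simp

end Complex

end IsCompleteIrreducibleFamily

end Representation

theorem tv_approx_conj_invariant_general
    {G : Type*} [Group G] [Fintype G] [DecidableEq G]
    (μ : G → ℝ) (hμ1 : ∑ g, μ g = 1)
    (hconj : ∀ g h : G, μ (h⁻¹ * g * h) = μ g)
    {ι : Type*} [Fintype ι] [DecidableEq ι]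
    (V : ι → Type) [∀ i, AddCommGroup (V i)] [∀ i, Module ℂ (V i)]
    [∀ i, FiniteDimensional ℂ (V i)] [∀ i, Nontrivial (V i)]
    (ρ : ∀ i, Representation ℂ G (V i))
    -- each `V i` is irreducible
    (hirr : ∀ i (U : Submodule ℂ (V i)), (∀ g v, v ∈ U → ρ i g v ∈ U) → U = ⊥ ∨ U = ⊤)
    -- the `V i` are pairwise non-isomorphic as representations
    (hnoniso : ∀ i j, i ≠ j →
      ¬ ∃ e : V i ≃ₗ[ℂ] V j, ∀ g v, e (ρ i g v) = ρ j g (e v))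
    -- every irreducible finite-dimensional complex representation of `G`
    -- is isomorphic to some `V i`
    (hcomplete : ∀ (W : Type) (_ : AddCommGroup W) (_ : Module ℂ W)
      (_ : FiniteDimensional ℂ W) (_ : Nontrivial W) (τ : Representation ℂ G W),
      (∀ U : Submodule ℂ W, (∀ g v, v ∈ U → τ g v ∈ U) → U = ⊥ ∨ U = ⊤) →
      ∃ i, ∃ e : W ≃ₗ[ℂ] V i, ∀ g v, e (τ g v) = ρ i g (e v))
    -- `i₀` indexes the trivial one-dimensional representation
    (i₀ : ι) (hi₀dim : Module.finrank ℂ (V i₀) = 1)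
    (hi₀triv : ∀ g : G, ρ i₀ g = LinearMap.id)
    (t : ℕ) (I : Finset ι) (hI : i₀ ∉ I) :
    abs ((1/2) * ∑ g : G,
          ‖groupConvPow (fun g => (μ g : ℂ)) t g - (Fintype.card G : ℂ)⁻¹‖ -
        (1/2) * (Fintype.card G : ℝ)⁻¹ * ∑ g : G,
          ‖∑ i ∈ I, (Module.finrank ℂ (V i) : ℂ) *
            ((Module.finrank ℂ (V i) : ℂ)⁻¹ *
              ∑ h : G, (μ h : ℂ) * LinearMap.trace ℂ (V i) (ρ i h)) ^ t *
            LinearMap.trace ℂ (V i) (ρ i g⁻¹)‖)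
      ≤ (1/2) * ∑ i ∈ univ.filter (fun i => i ∉ I ∧ i ≠ i₀),
          (Module.finrank ℂ (V i) : ℝ) *
            ‖(Module.finrank ℂ (V i) : ℂ)⁻¹ *
              ∑ h : G, (μ h : ℂ) * LinearMap.trace ℂ (V i) (ρ i h)‖ ^ t := by
  have hρ := Representation.isCompleteIrreducibleFamily_of_forall_submodule ρ hirr hnoniso hcomplete
  let ν : G → ℂ := fun g ↦ μ g
  let w : ι → G → ℂ := fun i g ↦
    (finrank ℂ (V i) : ℂ) * (ρ i).fourierScalar ν ^ t * (ρ i).character g⁻¹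
  let J := univ.filter (fun i ↦ i ∉ I ∧ i ≠ i₀)
  have hdiff : ∀ g, groupConvPow ν t g - (Fintype.card G : ℂ)⁻¹ =
      (Fintype.card G : ℂ)⁻¹ * (∑ i ∈ I, w i g + ∑ i ∈ J, w i g) := fun g ↦ by
    rw [hρ.groupConvPow_sub_inv_card (fun g h ↦ congrArg Complex.ofReal (hconj g h))
      (show ∑ g, (μ g : ℂ) = 1 by exact_mod_cast hμ1) hi₀triv hi₀dim, sum_univ_erase_eq_add_sum_filter hI]
  have hJ := hρ.sum_norm_sum_mul_character_inv_le J
    fun i ↦ (finrank ℂ (V i) : ℂ) * (ρ i).fourierScalar ν ^ t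
  simp only [norm_mul, norm_pow, Complex.norm_natCast] at hJ
  have hG : (0 : ℝ) < Fintype.card G := by exact_mod_cast Fintype.card_pos
  change |1/2 * ∑ g, ‖groupConvPow ν t g - (Fintype.card G : ℂ)⁻¹‖ -
      1/2 * (Fintype.card G : ℝ)⁻¹ * ∑ g, ‖∑ i ∈ I, w i g‖| ≤
    1/2 * ∑ i ∈ J, (finrank ℂ (V i) : ℝ) * ‖(ρ i).fourierScalar ν‖ ^ t
  calc _ = 1/2 * (Fintype.card G : ℝ)⁻¹ *
        |∑ g, ‖∑ i ∈ I, w i g + ∑ i ∈ J, w i g‖ - ∑ g, ‖∑ i ∈ I, w i g‖| := by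
        simp only [hdiff, norm_mul, norm_inv, Complex.norm_natCast, ← mul_sum]
        rw [← mul_assoc, ← mul_sub, abs_mul, abs_of_pos (by positivity)]
    _ ≤ 1/2 * (Fintype.card G : ℝ)⁻¹ *
        (Fintype.card G * ∑ i ∈ J, (finrank ℂ (V i) : ℝ) * ‖(ρ i).fourierScalar ν‖ ^ t) := by
        gcongr
        exact (abs_sum_norm_add_sub_sum_norm_le _ _ _).trans hJ
    _ = _ := by rw [mul_assoc, inv_mul_cancel_left₀ hG.ne']

theorem tv_approx_conj_invariant
    {G : Type*} [Group G] [Fintype G] [DecidableEq G]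
    (μ : G → ℝ) (hμ0 : ∀ g, 0 ≤ μ g) (hμ1 : ∑ g, μ g = 1)
    (hconj : ∀ g h : G, μ (h⁻¹ * g * h) = μ g)
    {ι : Type*} [Fintype ι] [DecidableEq ι]
    (V : ι → Type) [∀ i, AddCommGroup (V i)] [∀ i, Module ℂ (V i)]
    [∀ i, FiniteDimensional ℂ (V i)] [∀ i, Nontrivial (V i)]
    (ρ : ∀ i, Representation ℂ G (V i))
    -- each `V i` is irreducible
    (hirr : ∀ i (U : Submodule ℂ (V i)), (∀ g v, v ∈ U → ρ i g v ∈ U) → U = ⊥ ∨ U = ⊤)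
    -- the `V i` are pairwise non-isomorphic as representations
    (hnoniso : ∀ i j, i ≠ j →
      ¬ ∃ e : V i ≃ₗ[ℂ] V j, ∀ g v, e (ρ i g v) = ρ j g (e v))
    -- every irreducible finite-dimensional complex representation of `G`
    -- is isomorphic to some `V i`
    (hcomplete : ∀ (W : Type) (_ : AddCommGroup W) (_ : Module ℂ W)
      (_ : FiniteDimensional ℂ W) (_ : Nontrivial W) (τ : Representation ℂ G W),
      (∀ U : Submodule ℂ W, (∀ g v, v ∈ U → τ g v ∈ U) → U = ⊥ ∨ U = ⊤) →
      ∃ i, ∃ e : W ≃ₗ[ℂ] V i, ∀ g v, e (τ g v) = ρ i g (e v))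
    -- `i₀` indexes the trivial one-dimensional representation
    (i₀ : ι) (hi₀dim : Module.finrank ℂ (V i₀) = 1)
    (hi₀triv : ∀ g : G, ρ i₀ g = LinearMap.id)
    (t : ℕ) (I : Finset ι) (hI : i₀ ∉ I) :
    abs ((1/2) * ∑ g : G,
          ‖groupConvPow (fun g => (μ g : ℂ)) t g - (Fintype.card G : ℂ)⁻¹‖ -
        (1/2) * (Fintype.card G : ℝ)⁻¹ * ∑ g : G,
          ‖∑ i ∈ I, (Module.finrank ℂ (V i) : ℂ) *
            ((Module.finrank ℂ (V i) : ℂ)⁻¹ *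
              ∑ h : G, (μ h : ℂ) * LinearMap.trace ℂ (V i) (ρ i h)) ^ t *
            LinearMap.trace ℂ (V i) (ρ i g⁻¹)‖)
      ≤ (1/2) * ∑ i ∈ univ.filter (fun i => i ∉ I ∧ i ≠ i₀),
          (Module.finrank ℂ (V i) : ℝ) *
            ‖(Module.finrank ℂ (V i) : ℂ)⁻¹ *
              ∑ h : G, (μ h : ℂ) * LinearMap.trace ℂ (V i) (ρ i h)‖ ^ t :=
  tv_approx_conj_invariant_general μ hμ1 hconj V ρ hirr hnoniso hcomplete i₀ hi₀dim hi₀triv t I hI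
end

section
/- Let n₁, n₂ be positive integers, p ∈ (0,1), n := n₁+n₂ and α := p/(1−p), and let P be the transition matrix of the Gibbs sampler with parameters (n₁, n₂, p). Then for every i ∈ {0,1,...,n} and every x ∈ {0,...,n}: Σ_{x'=0}^{n} P(x,x')·K_i(x'; α/(α+1), n) = λ_i·K_i(x; α/(α+1), n), where λ_i := Π_{j=0}^{i−1} (n₁−j)/(n−j); in particular λ_i = 0 for i ≥ n₁+1. -/
open Finset

/-- The Binomial(N,p) pmf, extended by 0 to all integers. -/
noncomputable def binomPMF (N : ℕ) (p : ℝ) (j : ℤ) : ℝ :=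
  if 0 ≤ j then (N.choose j.toNat : ℝ) * p ^ j.toNat * (1 - p) ^ (N - j.toNat) else 0

/-- Transition matrix of the (location family) Gibbs sampler with Binomial priors
`Bin(n₁, p)` and `Bin(n₂, p)` on the state space `{0, ..., n₁ + n₂}`. -/
noncomputable def gibbsP (n₁ n₂ : ℕ) (p : ℝ) :
    Matrix (Fin (n₁ + n₂ + 1)) (Fin (n₁ + n₂ + 1)) ℝ :=
  fun x x' => (∑ θ ∈ Finset.range (n₁ + 1),
      binomPMF n₁ p θ * binomPMF n₂ p ((x : ℤ) - θ) * binomPMF n₂ p ((x' : ℤ) - θ)) /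
    binomPMF (n₁ + n₂) p (x : ℤ)

/-- The Krawtchouk polynomial `K_i(x; α/(α+1), n)`. -/
noncomputable def kraw (n : ℕ) (α : ℝ) (i x : ℕ) : ℝ :=
  ((n.choose i : ℝ))⁻¹ * ∑ j ∈ Finset.range (i + 1),
    (x.choose j : ℝ) * (((n - x).choose (i - j) : ℝ)) * (-1 / α) ^ j

/-!
Given `x`, the sampler draws `θ` from its posterior, which by Bayes' rule is hypergeometric,
`C(x, θ) C(n - x, n₁ - θ) / C(n, n₁)`, and then moves to `x' = θ + Y` with `Y ~ Bin(n₂, p)`.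
With `c = -(1 - p) / p`, the unnormalised Krawtchouk polynomial `S_i(x; N)` is the coefficient of
`t ^ i` in `(1 + c t) ^ x (1 + t) ^ (N - x)`. Averaging over `Y` multiplies this generating function
by `(p (1 + c t) + (1 - p) (1 + t)) ^ n₂ = 1`, so the second step maps `S_i(·; n)` to `S_i(·; n₁)`.
Averaging `S_i(θ; n₁)` over the hypergeometric posterior counts pairs `I ⊆ T` with `|I| = i` and
`|T| = n₁` in two ways, which gives `C(n - i, n₁ - i) / C(n, n₁) • S_i(x; n)`, and
`C(n - i, n₁ - i) / C(n, n₁) = C(n₁, i) / C(n, i) = ∏_{j < i} (n₁ - j) / (n - j)`.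
-/

open Polynomial

theorem Nat.sum_choose_mul_choose_mul_choose_mul_choose (a b m j k : ℕ) (h : j + k ≤ m) :
    ∑ θ ∈ range (m + 1), a.choose θ * θ.choose j * (b.choose (m - θ) * (m - θ).choose k) =
      a.choose j * b.choose k * ((a - j) + (b - k)).choose (m - j - k) := by
  rw [range_eq_Ico,
    ← sum_Ico_consecutive _ (by omega : 0 ≤ m - k + 1) (by omega : m - k + 1 ≤ m + 1),
    ← sum_Ico_consecutive _ (Nat.zero_le j) (by omega : j ≤ m - k + 1),
    sum_eq_zero (s := Ico 0 j) fun θ hθ => by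
      rw [Nat.choose_eq_zero_of_lt (mem_Ico.1 hθ).2, mul_zero, zero_mul],
    sum_eq_zero (s := Ico (m - k + 1) (m + 1)) fun θ hθ => by
      rw [Nat.choose_eq_zero_of_lt (by grind : m - θ < k), mul_zero, mul_zero],
    zero_add, add_zero, sum_Ico_eq_sum_range, show m - k + 1 - j = m - j - k + 1 by omega,
    add_choose_eq, Nat.sum_antidiagonal_eq_sum_range_succ_mk, mul_sum]
  refine sum_congr rfl fun s hs => ?_
  have hs : s ≤ m - j - k := mem_range_succ_iff.1 hs
  rw [Nat.choose_mul (Nat.le_add_right j s), Nat.choose_mul (by omega : k ≤ m - (j + s)),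
    Nat.add_sub_cancel_left, show m - (j + s) - k = m - j - k - s by omega]
  ring

theorem Nat.choose_mul_choose_sub_comm (M A B : ℕ) :
    M.choose A * (M - A).choose B = M.choose B * (M - B).choose A := by
  have hA := Nat.choose_mul (n := M) (Nat.le_add_right A B)
  have hB := Nat.choose_mul (n := M) (Nat.le_add_left B A)
  rw [Nat.add_sub_cancel_left] at hA
  rw [Nat.add_sub_cancel] at hB
  rw [← hA, ← hB, Nat.choose_symm_add]

theorem Nat.choose_mul_choose_mul_choose_sub {n₁ θ x : ℕ} (hθ : θ ≤ n₁) (hθx : θ ≤ x) (n₂ : ℕ) :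
    (n₁ + n₂).choose n₁ * (n₁.choose θ * n₂.choose (x - θ)) =
      (n₁ + n₂).choose x * (x.choose θ * (n₁ + n₂ - x).choose (n₁ - θ)) := by
  have h := Nat.choose_mul_choose_sub_comm (n₁ + n₂ - θ) (n₁ - θ) (x - θ)
  rw [show n₁ + n₂ - θ - (n₁ - θ) = n₂ by omega,
    show n₁ + n₂ - θ - (x - θ) = n₁ + n₂ - x by omega] at h
  rw [← mul_assoc, ← mul_assoc, Nat.choose_mul hθ, Nat.choose_mul hθx, mul_assoc, mul_assoc, h]

theorem prod_range_div_sub_eq_choose_div (a b i : ℕ) :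
    ∏ j ∈ range i, ((a : ℝ) - j) / ((b : ℝ) - j) = (a.choose i : ℝ) / (b.choose i : ℝ) := by
  rw [prod_div_distrib, Nat.cast_choose_eq_descPochhammer_div,
    Nat.cast_choose_eq_descPochhammer_div, div_div_div_cancel_right₀ (by positivity), descPochhammer_eval_eq_prod_range,
    descPochhammer_eval_eq_prod_range]

section Krawtchouk

variable {R : Type*} [CommRing R]

noncomputable def krawSum (c : R) (i x N : ℕ) : R :=
  ∑ j ∈ range (i + 1), (x.choose j : R) * ((N - x).choose (i - j) : R) * c ^ j

theorem krawSum_eq_coeff (c : R) (i x N : ℕ) :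
    krawSum c i x N = ((C c * X + 1) ^ x * (X + 1) ^ (N - x)).coeff i := by
  have h : (C c * X + 1) ^ x = ((X + 1) ^ x).comp (C c * X) := by
    simp [pow_comp]
  rw [h, coeff_mul, Nat.sum_antidiagonal_eq_sum_range_succ_mk, krawSum]
  refine sum_congr rfl fun j _ => ?_
  simp only [comp_C_mul_X_coeff, coeff_X_add_one_pow]
  ring

theorem sum_binomial_mul_krawSum {p c : R} (hpc : p * c = -(1 - p)) (i : ℕ)
    {θ n₁ : ℕ} (hθ : θ ≤ n₁) (n₂ : ℕ) :
    ∑ y ∈ range (n₂ + 1), (n₂.choose y : R) * p ^ y * (1 - p) ^ (n₂ - y) *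
      krawSum c i (θ + y) (n₁ + n₂) = krawSum c i θ n₁ := by
  have hone : C p * (C c * X + 1) + C (1 - p) * (X + 1) = (1 : R[X]) := by
    have hX : C p * C c + C (1 - p) = (0 : R[X]) := by rw [← C_mul, hpc, ← C_add]; simp
    have h1 : C p + C (1 - p) = (1 : R[X]) := by rw [← C_add]; simp
    linear_combination X * hX + h1
  simp only [krawSum_eq_coeff, ← coeff_C_mul, ← finsetSum_coeff]
  congr 1
  calc ∑ y ∈ range (n₂ + 1), C ((n₂.choose y : R) * p ^ y * (1 - p) ^ (n₂ - y)) *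
        ((C c * X + 1) ^ (θ + y) * (X + 1) ^ (n₁ + n₂ - (θ + y)))
      = (C c * X + 1) ^ θ * (X + 1) ^ (n₁ - θ) * ∑ y ∈ range (n₂ + 1),
          (C p * (C c * X + 1)) ^ y * (C (1 - p) * (X + 1)) ^ (n₂ - y) * (n₂.choose y : R[X]) := by
        rw [mul_sum]
        refine sum_congr rfl fun y hy => ?_
        rw [show n₁ + n₂ - (θ + y) = (n₁ - θ) + (n₂ - y) by grind]
        simp only [map_mul, map_pow, map_natCast, mul_pow, pow_add]
        ring
    _ = (C c * X + 1) ^ θ * (X + 1) ^ (n₁ - θ) := by rw [← add_pow, hone, one_pow, mul_one]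

theorem krawSum_eq_zero_of_lt (c : R) {i x N : ℕ} (hx : x ≤ N) (hi : N < i) :
    krawSum c i x N = 0 := by
  refine sum_eq_zero fun j _ => ?_
  rcases le_or_gt j x with hj | hj
  · rw [Nat.choose_eq_zero_of_lt (by omega : N - x < i - j)]; simp
  · rw [Nat.choose_eq_zero_of_lt hj]; simp

theorem sum_hypergeometric_mul_krawSum (c : R) (i : ℕ) {x N : ℕ} (hx : x ≤ N) (m : ℕ) :
    (N.choose i : R) * ∑ θ ∈ range (m + 1),
        (x.choose θ : R) * ((N - x).choose (m - θ) : R) * krawSum c i θ m =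
      (N.choose m : R) * (m.choose i : R) * krawSum c i x N := by
  rcases lt_or_ge m i with hmi | him
  · rw [Nat.choose_eq_zero_of_lt hmi, sum_eq_zero fun θ hθ => by
      rw [krawSum_eq_zero_of_lt c (mem_range_succ_iff.1 hθ) hmi, mul_zero]]
    simp
  have key : ∀ j ∈ range (i + 1), ∑ θ ∈ range (m + 1),
      (x.choose θ * θ.choose j * ((N - x).choose (m - θ) * (m - θ).choose (i - j)) : R) =
      (x.choose j * (N - x).choose (i - j) * (N - i).choose (m - i) : R) := by
    intro j hj
    have hj : j ≤ i := mem_range_succ_iff.1 hj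
    rw_mod_cast [Nat.sum_choose_mul_choose_mul_choose_mul_choose _ _ _ _ _ (by omega),
      show m - j - (i - j) = m - i by omega]
    rcases le_or_gt j x with hjx | hjx
    · rcases le_or_gt (i - j) (N - x) with hijx | hijx
      · rw [show x - j + (N - x - (i - j)) = N - i by omega]
      · simp [Nat.choose_eq_zero_of_lt hijx]
    · simp [Nat.choose_eq_zero_of_lt hjx]
  calc (N.choose i : R) * ∑ θ ∈ range (m + 1),
        (x.choose θ : R) * ((N - x).choose (m - θ) : R) * krawSum c i θ m
      = ∑ j ∈ range (i + 1), (N.choose i : R) * c ^ j * ∑ θ ∈ range (m + 1),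
          (x.choose θ * θ.choose j * ((N - x).choose (m - θ) * (m - θ).choose (i - j)) : R) := by
        simp only [krawSum, mul_sum]
        rw [sum_comm]
        exact sum_congr rfl fun j _ => sum_congr rfl fun θ _ => by ring
    _ = (N.choose i : R) * ((N - i).choose (m - i) : R) * krawSum c i x N := by
        rw [krawSum, mul_sum]
        exact sum_congr rfl fun j hj => by rw [key j hj]; ring
    _ = (N.choose m : R) * (m.choose i : R) * krawSum c i x N := by
        rw_mod_cast [Nat.choose_mul him]

end Krawtchouk

theorem binomPMF_natCast (N : ℕ) (p : ℝ) (a : ℕ) :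
    binomPMF N p a = N.choose a * p ^ a * (1 - p) ^ (N - a) := by
  simp [binomPMF]

theorem binomPMF_natCast_pos {p : ℝ} (hp : p ∈ Set.Ioo (0 : ℝ) 1) {N a : ℕ} (ha : a ≤ N) :
    0 < binomPMF N p a := by
  have hq : 0 < 1 - p := sub_pos.2 hp.2
  have := Nat.choose_pos ha
  rw [binomPMF_natCast]
  exact mul_pos (mul_pos (by positivity) (pow_pos hp.1 a)) (pow_pos hq _)

theorem binomPMF_natCast_sub {N : ℕ} {p : ℝ} {a b : ℕ} (h : b ≤ a) :
    binomPMF N p ((a : ℤ) - b) = binomPMF N p (a - b : ℕ) := by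
  rw [Nat.cast_sub h]

theorem binomPMF_natCast_sub_of_lt (N : ℕ) (p : ℝ) {a b : ℕ} (h : a < b) :
    binomPMF N p ((a : ℤ) - b) = 0 := by
  simp [binomPMF, h]

theorem binomPMF_mul_binomPMF_sub {n₁ θ : ℕ} (hθ : θ ≤ n₁) (n₂ x : ℕ) (p : ℝ) :
    binomPMF n₁ p θ * binomPMF n₂ p ((x : ℤ) - θ) * (n₁ + n₂).choose n₁ =
      binomPMF (n₁ + n₂) p x * (x.choose θ * (n₁ + n₂ - x).choose (n₁ - θ)) := by
  rcases lt_or_ge x θ with hxθ | hθx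
  · rw [binomPMF_natCast_sub_of_lt _ _ hxθ, Nat.choose_eq_zero_of_lt hxθ]
    simp
  have hcount := Nat.choose_mul_choose_mul_choose_sub hθ hθx n₂
  have hpow : binomPMF n₁ p θ * binomPMF n₂ p ((x : ℤ) - θ) * (n₁ + n₂).choose n₁ =
      ((n₁ + n₂).choose n₁ * (n₁.choose θ * n₂.choose (x - θ)) : ℕ) * p ^ x *
        (1 - p) ^ (n₁ + n₂ - x) := by
    rw [binomPMF_natCast_sub hθx, binomPMF_natCast, binomPMF_natCast]
    rcases le_or_gt (x - θ) n₂ with h | h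
    · have hp : p ^ x = p ^ θ * p ^ (x - θ) := by rw [← pow_add, Nat.add_sub_cancel' hθx]
      have hq : (1 - p) ^ (n₁ + n₂ - x) = (1 - p) ^ (n₁ - θ) * (1 - p) ^ (n₂ - (x - θ)) := by
        rw [← pow_add]; congr 1; omega
      rw [hp, hq]
      push_cast
      ring
    · simp [Nat.choose_eq_zero_of_lt h]
  rw [hpow, hcount, binomPMF_natCast]
  push_cast
  ring

theorem sum_range_binomPMF_sub_mul {N θ M : ℕ} (h : θ + N ≤ M) (p : ℝ) (f : ℕ → ℝ) :
    ∑ k ∈ range (M + 1), binomPMF N p ((k : ℤ) - θ) * f k =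
      ∑ y ∈ range (N + 1), N.choose y * p ^ y * (1 - p) ^ (N - y) * f (θ + y) := by
  rw [range_eq_Ico,
    ← sum_Ico_consecutive _ (by omega : 0 ≤ θ + N + 1) (by omega : θ + N + 1 ≤ M + 1),
    ← sum_Ico_consecutive _ (Nat.zero_le θ) (by omega : θ ≤ θ + N + 1),
    sum_eq_zero (s := Ico 0 θ) fun k hk => by
      rw [binomPMF_natCast_sub_of_lt N p (mem_Ico.1 hk).2, zero_mul],
    sum_eq_zero (s := Ico (θ + N + 1) (M + 1)) fun k hk => by
      rw [binomPMF_natCast_sub (by grind), binomPMF_natCast,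
        Nat.choose_eq_zero_of_lt (by grind : N < k - θ)]
      simp,
    zero_add, add_zero, sum_Ico_eq_sum_range, show θ + N + 1 - θ = N + 1 by omega]
  refine sum_congr rfl fun y _ => ?_
  rw [binomPMF_natCast_sub (Nat.le_add_right θ y), Nat.add_sub_cancel_left, binomPMF_natCast]

theorem sum_binomPMF_sub_mul_krawSum {p c : ℝ} (hpc : p * c = -(1 - p)) (i : ℕ) {θ n₁ : ℕ}
    (hθ : θ ≤ n₁) (n₂ : ℕ) :
    ∑ x' : Fin (n₁ + n₂ + 1), binomPMF n₂ p ((x' : ℤ) - θ) * krawSum c i x' (n₁ + n₂) =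
      krawSum c i θ n₁ := by
  rw [Fin.sum_univ_eq_sum_range (fun k => binomPMF n₂ p ((k : ℤ) - θ) * krawSum c i k (n₁ + n₂)),
    sum_range_binomPMF_sub_mul (by omega), sum_binomial_mul_krawSum hpc i hθ]

theorem sum_gibbsP_mul (n₁ n₂ : ℕ) (p : ℝ) (x : Fin (n₁ + n₂ + 1)) (f : Fin (n₁ + n₂ + 1) → ℝ) :
    ∑ x', gibbsP n₁ n₂ p x x' * f x' =
      (∑ θ ∈ range (n₁ + 1), binomPMF n₁ p θ * binomPMF n₂ p ((x : ℤ) - θ) *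
        ∑ x' : Fin (n₁ + n₂ + 1), binomPMF n₂ p ((x' : ℤ) - θ) * f x') /
        binomPMF (n₁ + n₂) p x := by
  simp only [gibbsP, div_mul_eq_mul_div, ← sum_div, sum_mul, mul_sum]
  rw [sum_comm]
  exact congrArg (· / _) (sum_congr rfl fun θ _ => sum_congr rfl fun x' _ => by ring)

theorem choose_mul_sum_gibbsP_mul_krawSum {n₁ n₂ : ℕ} {p c : ℝ} (hpc : p * c = -(1 - p))
    (i : ℕ) (x : Fin (n₁ + n₂ + 1)) (hm : binomPMF (n₁ + n₂) p x ≠ 0) :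
    ((n₁ + n₂).choose i : ℝ) *
        ∑ x', gibbsP n₁ n₂ p x x' * krawSum c i x' (n₁ + n₂) =
      n₁.choose i * krawSum c i x (n₁ + n₂) := by
  have hCn : ((n₁ + n₂).choose n₁ : ℝ) ≠ 0 :=
    Nat.cast_ne_zero.2 (Nat.choose_pos (Nat.le_add_right n₁ n₂)).ne'
  have hstep : ∀ θ ∈ range (n₁ + 1), binomPMF n₁ p θ * binomPMF n₂ p ((x : ℤ) - θ) *
      ∑ x' : Fin (n₁ + n₂ + 1), binomPMF n₂ p ((x' : ℤ) - θ) * krawSum c i x' (n₁ + n₂) =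
      binomPMF n₁ p θ * binomPMF n₂ p ((x : ℤ) - θ) * krawSum c i θ n₁ := fun θ hθ => by
    rw [sum_binomPMF_sub_mul_krawSum hpc i (mem_range_succ_iff.1 hθ)]
  have hbayes : ((n₁ + n₂).choose n₁ : ℝ) *
      ∑ θ ∈ range (n₁ + 1), binomPMF n₁ p θ * binomPMF n₂ p ((x : ℤ) - θ) * krawSum c i θ n₁ =
      binomPMF (n₁ + n₂) p x * ∑ θ ∈ range (n₁ + 1),
        ((x : ℕ).choose θ : ℝ) * ((n₁ + n₂ - x).choose (n₁ - θ) : ℝ) * krawSum c i θ n₁ := by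
    simp only [mul_sum]
    refine sum_congr rfl fun θ hθ => ?_
    linear_combination krawSum c i θ n₁ *
      binomPMF_mul_binomPMF_sub (mem_range_succ_iff.1 hθ) n₂ x p
  rw [sum_gibbsP_mul, sum_congr rfl hstep, mul_div_assoc', div_eq_iff hm]
  apply mul_left_cancel₀ hCn
  linear_combination ((n₁ + n₂).choose i : ℝ) * hbayes +
    binomPMF (n₁ + n₂) p x * sum_hypergeometric_mul_krawSum c i (Fin.is_le x) n₁

theorem kraw_eq_inv_mul_krawSum (n : ℕ) (α : ℝ) (i x : ℕ) :
    kraw n α i x = (n.choose i : ℝ)⁻¹ * krawSum (-1 / α) i x n :=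
  rfl

theorem gibbs_sampler_eigenfunctions_general
    (n₁ n₂ : ℕ) (p : ℝ) (hp : p ∈ Set.Ioo (0 : ℝ) 1)
    (i : ℕ) (hi : i ≤ n₁ + n₂) :
    (∀ x : Fin (n₁ + n₂ + 1),
      ∑ x' : Fin (n₁ + n₂ + 1),
        gibbsP n₁ n₂ p x x' * kraw (n₁ + n₂) (p / (1 - p)) i (x' : ℕ) =
      (∏ j ∈ Finset.range i, ((n₁ : ℝ) - j) / (((n₁ + n₂ : ℕ) : ℝ) - j)) *
        kraw (n₁ + n₂) (p / (1 - p)) i (x : ℕ)) ∧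
    (n₁ + 1 ≤ i →
      (∏ j ∈ Finset.range i, ((n₁ : ℝ) - j) / (((n₁ + n₂ : ℕ) : ℝ) - j)) = 0) := by
  have hpc : p * (-1 / (p / (1 - p))) = -(1 - p) := by
    have : p ≠ 0 := hp.1.ne'
    have : 1 - p ≠ 0 := (sub_pos.2 hp.2).ne'
    field_simp
  have hCi : ((n₁ + n₂).choose i : ℝ) ≠ 0 := Nat.cast_ne_zero.2 (Nat.choose_pos hi).ne'
  rw [prod_range_div_sub_eq_choose_div]
  refine ⟨fun x => ?_, fun h => by rw [Nat.choose_eq_zero_of_lt h, Nat.cast_zero, zero_div]⟩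
  have key := choose_mul_sum_gibbsP_mul_krawSum hpc i x (binomPMF_natCast_pos hp (Fin.is_le x)).ne'
  simp only [kraw_eq_inv_mul_krawSum, mul_left_comm _ (((n₁ + n₂).choose i : ℝ)⁻¹), ← mul_sum]
  generalize -1 / (p / (1 - p)) = c at key ⊢
  field_simp
  linear_combination key

theorem gibbs_sampler_eigenfunctions
    (n₁ n₂ : ℕ) (hn₁ : 0 < n₁) (hn₂ : 0 < n₂) (p : ℝ) (hp : p ∈ Set.Ioo (0 : ℝ) 1)
    (i : ℕ) (hi : i ≤ n₁ + n₂) :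
    (∀ x : Fin (n₁ + n₂ + 1),
      ∑ x' : Fin (n₁ + n₂ + 1),
        gibbsP n₁ n₂ p x x' * kraw (n₁ + n₂) (p / (1 - p)) i (x' : ℕ) =
      (∏ j ∈ Finset.range i, ((n₁ : ℝ) - j) / (((n₁ + n₂ : ℕ) : ℝ) - j)) *
        kraw (n₁ + n₂) (p / (1 - p)) i (x : ℕ)) ∧
    (n₁ + 1 ≤ i →
      (∏ j ∈ Finset.range i, ((n₁ : ℝ) - j) / (((n₁ + n₂ : ℕ) : ℝ) - j)) = 0) :=
  gibbs_sampler_eigenfunctions_general n₁ n₂ p hp i hi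
end

section
/- For every ε > 0 and every c ∈ ℝ there exists M ∈ ℕ such that the following holds for all positive integers n₁, n₂ and all p ∈ (0,1): write n := n₁+n₂, α := p/(1−p), λ_i := Π_{j=0}^{i−1} (n₁−j)/(n−j) for i ∈ {0,...,n}, and t := (½·log(αn) + c)/log(n/n₁) (a real number); if t ≥ 0, then Σ_{i=M+1}^{n} α^{i/2}·C(n,i)^{1/2}·λ_i^{t} ≤ Σ_{i=M+1}^{n} α^{i/2}·C(n,i)^{1/2}·(n₁/n)^{i·t} ≤ ε, where for a ≥ 0 and real s ≥ 0, a^s denotes the real power. -/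
/-!
The exponent `t` is chosen so that `(n₁/n)^t = e^{-c}/√(αn)`. With `C(n,i) ≤ n^i/i!` this bounds
the `i`-th term of the middle sum by `e^{-ic}/√(i!)`, uniformly in `n₁`, `n₂` and `p`. These
majorants form a convergent series (ratio test), so its tails beyond a suitable `M` are below `ε`.
The first inequality holds termwise, since `0 ≤ λ_i ≤ (n₁/n)^i` and `s ↦ s^t` is monotone.
-/

open Finset Real
open scoped Nat

lemma sub_div_sub_nonneg_and_le {a b j : ℝ} (hj : 0 ≤ j) (hja : j < a) (hab : a ≤ b) :
    0 ≤ (a - j) / (b - j) ∧ (a - j) / (b - j) ≤ a / b := by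
  refine ⟨div_nonneg (by linarith) (by linarith), ?_⟩
  rw [div_le_div_iff₀ (by linarith) (by linarith)]
  nlinarith

lemma prod_range_sub_div_sub_nonneg_and_le_pow {a b : ℕ} (hab : a ≤ b) (i : ℕ) :
    0 ≤ ∏ j ∈ range i, ((a : ℝ) - j) / ((b : ℝ) - j) ∧
      ∏ j ∈ range i, ((a : ℝ) - j) / ((b : ℝ) - j) ≤ ((a : ℝ) / b) ^ i := by
  rcases lt_or_ge a i with hai | hia
  · rw [prod_eq_zero (mem_range.2 hai) (by simp)]
    exact ⟨le_rfl, by positivity⟩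
  · have hfactor (j : ℕ) (hj : j ∈ range i) :=
      sub_div_sub_nonneg_and_le (a := a) (b := b) j.cast_nonneg
        (by exact_mod_cast (mem_range.1 hj).trans_le hia) (by exact_mod_cast hab)
    refine ⟨prod_nonneg fun j hj => (hfactor j hj).1, ?_⟩
    calc ∏ j ∈ range i, ((a : ℝ) - j) / ((b : ℝ) - j) ≤ ∏ _j ∈ range i, (a : ℝ) / b :=
          prod_le_prod (fun j hj => (hfactor j hj).1) (fun j hj => (hfactor j hj).2)
      _ = ((a : ℝ) / b) ^ i := by rw [prod_const, card_range]

lemma sqrt_choose_le (n i : ℕ) : √(n.choose i : ℝ) ≤ √(n : ℝ) ^ i / √(i ! : ℝ) := by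
  rw [le_div_iff₀ (by positivity), ← sqrt_mul (by positivity), sqrt_le_iff]
  refine ⟨by positivity, ?_⟩
  rw [← pow_mul, mul_comm i 2, pow_mul, sq_sqrt n.cast_nonneg,
    ← le_div_iff₀ (by positivity)]
  exact Nat.choose_le_pow_div i n

lemma summable_pow_div_sqrt_factorial (y : ℝ) : Summable fun i : ℕ => y ^ i / √(i ! : ℝ) := by
  refine summable_of_ratio_norm_eventually_le (r := 1 / 2) (by norm_num) ?_
  filter_upwards [Filter.eventually_ge_atTop ⌈4 * y ^ 2⌉₊] with i hi
  have hy : |y| / √(i + 1 : ℕ) ≤ 1 / 2 := by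
    have : 2 * |y| ≤ √(i + 1 : ℕ) := by
      rw [le_sqrt (by positivity) (by positivity), mul_pow, sq_abs]
      push_cast
      linarith [Nat.ceil_le.1 hi]
    rw [div_le_iff₀ (by positivity)]
    linarith
  rw [Nat.factorial_succ, Nat.cast_mul, sqrt_mul (by positivity), pow_succ]
  simp only [norm_div, norm_mul, norm_pow, norm_eq_abs, abs_of_nonneg (sqrt_nonneg _)]
  rw [mul_comm (√_), ← div_mul_div_comm, mul_comm]
  exact mul_le_mul_of_nonneg_right hy (by positivity)

theorem Summable.exists_sum_Icc_lt {f : ℕ → ℝ} (hf : Summable f) {ε : ℝ} (hε : 0 < ε) :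
    ∃ M, ∀ n, ∑ i ∈ Icc (M + 1) n, f i < ε := by
  obtain ⟨s, hs⟩ := hf.vanishing (Iio_mem_nhds hε)
  refine ⟨s.sup id, fun n => hs _ (disjoint_left.2 fun i hi his => ?_)⟩
  have := le_sup (f := id) his
  simp only [mem_Icc, id] at hi this
  omega

lemma rpow_eq_exp_neg_div_sqrt {r β t c : ℝ} (hr₀ : 0 < r) (hr₁ : r < 1) (hβ : 0 < β)
    (ht : t = (1 / 2 * log β + c) / log r⁻¹) : r ^ t = exp (-c) / √β := by
  have hlog : log r ≠ 0 := (log_neg hr₀ hr₁).ne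
  rw [rpow_def_of_pos hr₀, sqrt_eq_rpow, rpow_def_of_pos hβ, ← exp_sub, ht, log_inv]
  congr 1
  field_simp
  ring

lemma rpow_div_two_mul_sqrt_choose_mul_pow_le {α y : ℝ} (hα : 0 < α) (hy : 0 ≤ y) {n : ℕ}
    (hn : 0 < n) (i : ℕ) :
    α ^ ((i : ℝ) / 2) * √(n.choose i : ℝ) * (y / √(α * n)) ^ i ≤ y ^ i / √(i ! : ℝ) := by
  have hn' : 0 < √(n : ℝ) := sqrt_pos.2 (by exact_mod_cast hn)
  calc α ^ ((i : ℝ) / 2) * √(n.choose i : ℝ) * (y / √(α * n)) ^ i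
      = √(n.choose i : ℝ) * y ^ i / √(n : ℝ) ^ i := by
        rw [rpow_div_two_eq_sqrt _ hα.le, rpow_natCast, sqrt_mul hα.le, div_pow, mul_pow]
        field_simp
    _ ≤ √(n : ℝ) ^ i / √(i ! : ℝ) * y ^ i / √(n : ℝ) ^ i := by gcongr; exact sqrt_choose_le n i
    _ = y ^ i / √(i ! : ℝ) := by field_simp

theorem gibbs_error_term_bound (ε : ℝ) (hε : 0 < ε) (c : ℝ) :
    ∃ M : ℕ, ∀ (n₁ n₂ : ℕ), 0 < n₁ → 0 < n₂ → ∀ p : ℝ, p ∈ Set.Ioo (0 : ℝ) 1 →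
      ∀ α : ℝ, α = p / (1 - p) →
      ∀ lam : ℕ → ℝ,
        (∀ i, lam i = ∏ j ∈ Finset.range i, ((n₁ : ℝ) - j) / (((n₁ + n₂ : ℕ) : ℝ) - j)) →
      ∀ t : ℝ,
        t = ((1/2) * Real.log (α * ((n₁ + n₂ : ℕ) : ℝ)) + c) /
          Real.log (((n₁ + n₂ : ℕ) : ℝ) / (n₁ : ℝ)) →
        0 ≤ t →
        (∑ i ∈ Finset.Icc (M + 1) (n₁ + n₂),
            α ^ ((i : ℝ) / 2) * Real.sqrt (((n₁ + n₂).choose i : ℝ)) * lam i ^ t ≤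
          ∑ i ∈ Finset.Icc (M + 1) (n₁ + n₂),
            α ^ ((i : ℝ) / 2) * Real.sqrt (((n₁ + n₂).choose i : ℝ)) *
              ((n₁ : ℝ) / ((n₁ + n₂ : ℕ) : ℝ)) ^ ((i : ℝ) * t)) ∧
        (∑ i ∈ Finset.Icc (M + 1) (n₁ + n₂),
            α ^ ((i : ℝ) / 2) * Real.sqrt (((n₁ + n₂).choose i : ℝ)) *
              ((n₁ : ℝ) / ((n₁ + n₂ : ℕ) : ℝ)) ^ ((i : ℝ) * t) ≤ ε) := by
  obtain ⟨M, hM⟩ := (summable_pow_div_sqrt_factorial (exp (-c))).exists_sum_Icc_lt hε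
  refine ⟨M, fun n₁ n₂ hn₁ hn₂ p hp α hα lam hlam t ht ht₀ => ?_⟩
  have hα₀ : 0 < α := hα ▸ div_pos hp.1 (sub_pos.2 hp.2)
  constructor
  · refine sum_le_sum fun i _ => mul_le_mul_of_nonneg_left ?_ (by positivity)
    obtain ⟨hlam₀, hlam_le⟩ := prod_range_sub_div_sub_nonneg_and_le_pow (n₁.le_add_right n₂) i
    rw [hlam, rpow_natCast_mul (by positivity)]
    exact rpow_le_rpow hlam₀ hlam_le ht₀
  · have hr₁ : (n₁ : ℝ) / ((n₁ + n₂ : ℕ) : ℝ) < 1 := by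
      rw [div_lt_one (by positivity)]; exact_mod_cast (show n₁ < n₁ + n₂ by omega)
    have hrt : ((n₁ : ℝ) / ((n₁ + n₂ : ℕ) : ℝ)) ^ t = exp (-c) / √(α * ((n₁ + n₂ : ℕ) : ℝ)) :=
      rpow_eq_exp_neg_div_sqrt (by positivity) hr₁ (by positivity) (by rwa [inv_div])
    refine (sum_le_sum fun i _ => ?_).trans (hM _).le
    rw [mul_comm (i : ℝ), rpow_mul_natCast (by positivity), hrt]
    exact rpow_div_two_mul_sqrt_choose_mul_pow_le hα₀ (exp_pos _).le (by omega) i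
end

section
/- For r ≥ 1 and m ∈ ℕ define T_r(m) := Σ_{i=0}^{r} C(m, r−i)·(−1)^i/i!, with the convention that C(m, j) = 0 unless 0 ≤ j ≤ m. Then for every c ∈ ℝ and every m ∈ ℕ, the series Σ_{r=1}^{∞} e^{−rc}·T_r(m) converges absolutely and Σ_{r=1}^{∞} e^{−rc}·T_r(m) = e^{−e^{−c}}·(1 + e^{−c})^m − 1. -/
/-!
`x ^ n * T_n(m)` is the `n`-th coefficient of the Cauchy product of the binomial series
`Σ C(m, k) x^k = (1 + x)^m` with the exponential series `Σ (-x)^i / i! = e^{-x}`; both converge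
absolutely, so their product `e^{-x} (1 + x)^m = Σ_{n ≥ 0} x^n T_n(m)` does too. Put `x = e^{-c}`
and drop the term `T_0(m) = 1`.
-/

open Finset

/-- The polynomial `T_r` evaluated at `m`:
`T_r(m) = Σ_{i=0}^{r} C(m, r−i)·(−1)^i/i!`. -/
noncomputable def Tpoly (r m : ℕ) : ℝ :=
  ∑ i ∈ Finset.range (r + 1), (m.choose (r - i) : ℝ) * (-1) ^ i / (i.factorial : ℝ)

open Nat

theorem hasSum_choose_mul_pow {R : Type*} [CommSemiring R] [TopologicalSpace R] (m : ℕ) (x : R) :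
    HasSum (fun k => (m.choose k : R) * x ^ k) ((1 + x) ^ m) := by
  have hsupp : ∀ k ∉ range (m + 1), (m.choose k : R) * x ^ k = 0 := fun k hk => by
    simp [choose_eq_zero_of_lt (by simpa using hk : m < k)]
  rw [add_comm, add_pow]
  simpa only [one_pow, mul_one, mul_comm] using hasSum_sum_of_ne_finset_zero hsupp

theorem summable_norm_choose_mul_pow {R : Type*} [SeminormedRing R] (m : ℕ) (x : R) :
    Summable fun k => ‖(m.choose k : R) * x ^ k‖ :=
  summable_of_ne_finset_zero (s := range (m + 1)) fun k hk => by
    simp [choose_eq_zero_of_lt (by simpa using hk : m < k)]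

theorem Real.summable_norm_pow_div_factorial (y : ℝ) :
    Summable fun i => ‖y ^ i / (i ! : ℝ)‖ :=
  (Real.summable_pow_div_factorial |y|).congr fun i => by
    simp [Real.norm_eq_abs]

theorem Tpoly_zero (m : ℕ) : Tpoly 0 m = 1 := by
  simp [Tpoly]

theorem pow_mul_Tpoly_eq_sum_range (x : ℝ) (n m : ℕ) :
    x ^ n * Tpoly n m =
      ∑ k ∈ range (n + 1), (m.choose k * x ^ k) * ((-x) ^ (n - k) / ((n - k) ! : ℝ)) := by
  rw [Tpoly, mul_sum, ← sum_range_reflect]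
  refine sum_congr rfl fun i hi => ?_
  have hi : i ≤ n := by simpa [Nat.lt_succ_iff] using hi
  rw [show n + 1 - 1 - i = n - i by omega, Nat.sub_sub_self hi, neg_pow,
    ← pow_sub_mul_pow x hi]
  ring

theorem summable_norm_pow_mul_Tpoly (x : ℝ) (m : ℕ) :
    Summable fun n => ‖x ^ n * Tpoly n m‖ := by
  simpa only [pow_mul_Tpoly_eq_sum_range] using
    summable_norm_sum_mul_range_of_summable_norm (summable_norm_choose_mul_pow m x)
      (Real.summable_norm_pow_div_factorial (-x))

theorem hasSum_pow_mul_Tpoly (x : ℝ) (m : ℕ) :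
    HasSum (fun n => x ^ n * Tpoly n m) (Real.exp (-x) * (1 + x) ^ m) := by
  have hexp : ∑' i, (-x) ^ i / (i ! : ℝ) = Real.exp (-x) := by
    rw [Real.exp_eq_exp_ℝ]
    exact (NormedSpace.expSeries_div_hasSum_exp (-x)).tsum_eq
  refine (summable_norm_pow_mul_Tpoly x m).of_norm.hasSum_iff.mpr ?_
  rw [mul_comm, ← (hasSum_choose_mul_pow m x).tsum_eq, ← hexp,
    tsum_mul_tsum_eq_tsum_sum_range_of_summable_norm (summable_norm_choose_mul_pow m x)
      (Real.summable_norm_pow_div_factorial (-x))]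
  simp only [pow_mul_Tpoly_eq_sum_range]

theorem Tpoly_generating_function (c : ℝ) (m : ℕ) :
    (Summable fun r : ℕ => |Real.exp (-((r + 1 : ℕ) : ℝ) * c) * Tpoly (r + 1) m|) ∧
    (∑' r : ℕ, Real.exp (-((r + 1 : ℕ) : ℝ) * c) * Tpoly (r + 1) m =
      Real.exp (-Real.exp (-c)) * (1 + Real.exp (-c)) ^ m - 1) := by
  have hexp (r : ℕ) : Real.exp (-((r + 1 : ℕ) : ℝ) * c) = Real.exp (-c) ^ (r + 1) := by
    rw [← Real.exp_nat_mul]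
    ring_nf
  simp only [hexp, ← Real.norm_eq_abs]
  refine ⟨(summable_nat_add_iff 1).mpr (summable_norm_pow_mul_Tpoly _ m), ?_⟩
  have hshift := (hasSum_nat_add_iff' 1).mpr (hasSum_pow_mul_Tpoly (Real.exp (-c)) m)
  simpa [Tpoly_zero] using hshift.tsum_eq
end

section
/- For c ∈ ℝ define f_c : ℕ → ℝ by f_c(m) := e^{−e^{−c}}·(1 + e^{−c})^m − 1, and for a permutation σ let Fix(σ) denote its number of fixed points. Let (ε_n) be any sequence with ε_n ∈ {+1, −1} for each n. Then (2/n!)·Σ_{σ ∈ S_n : sgn(σ) = ε_n} |f_c(Fix(σ))| → Σ_{m=0}^{∞} (e^{−1}/m!)·|f_c(m)| as n → ∞, and moreover Σ_{m=0}^{∞} (e^{−1}/m!)·|f_c(m)| = Σ_{m=0}^{∞} |e^{−(1+e^{−c})}(1+e^{−c})^m/m! − e^{−1}/m!| = 2·d_TV(Pois(1+e^{−c}), Pois(1)). -/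
/-!
Group the permutations of sign `u` by their fixed-point set `S`: those with fixed set exactly `S`
are the derangements of `Sᶜ` of sign `u` extended by the identity. Hence
`(2 / n!) ∑_{sgn σ = u} g(Fix σ) = ∑_{m ≤ n} g(m)/m! · 2 D_u(n - m)/(n - m)!`, where `D_u(k)`
counts the derangements of `Fin k` of sign `u`. The signed count of all derangements of `Fin k`
is the Leibniz expansion of `det (J - 1) = (-1)^k (1 - k)`, `J` the all-ones matrix, so
`2 D_u(k) = D(k) + u (-1)^k (1 - k)` with `D(k)` the number of derangements. Thus `2 D_u(k)/k!`
stays below `2` and tends to `e⁻¹` like `D(k)/k!`, uniformly in `u`, and Tannery's theorem gives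
the limit. The identity with the Poisson weights holds term by term.
-/

open Finset Equiv

open scoped Classical

/-- `f_c(m) := e^{−e^{−c}}·(1 + e^{−c})^m − 1`. -/
noncomputable def fcFun (c : ℝ) (m : ℕ) : ℝ :=
  Real.exp (-Real.exp (-c)) * (1 + Real.exp (-c)) ^ m - 1

/-- The number of fixed points of a permutation of `Fin n`. -/
noncomputable def numFix {n : ℕ} (σ : Perm (Fin n)) : ℕ :=
  (univ.filter fun x => σ x = x).card

open scoped Nat

open Filter Topology

noncomputable def numDerangementsOfSign (k : ℕ) (u : ℤˣ) : ℕ :=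
  #{σ : Perm (Fin k) | σ ∈ derangements (Fin k) ∧ Perm.sign σ = u}

section Counting

variable {α : Type*} [Fintype α] [DecidableEq α]

theorem card_derangements_sign_eq (u : ℤˣ) :
    #{σ : Perm α | σ ∈ derangements α ∧ Perm.sign σ = u} =
      numDerangementsOfSign (Fintype.card α) u := by
  let e := Fintype.equivFin α
  unfold numDerangementsOfSign
  rw [← Fintype.card_subtype, ← Fintype.card_subtype]
  refine Fintype.card_congr (e.permCongr.subtypeEquiv fun σ => ?_)
  rw [Perm.sign_permCongr]
  refine and_congr_left' ⟨fun h y hy => h (e.symm y) ?_, fun h x hx => h (e x) ?_⟩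
  · exact e.injective (by simpa using hy)
  · simp [permCongr_apply, hx]

theorem card_sign_fixedPoints_eq (u : ℤˣ) (S : Finset α) :
    #{σ : Perm α | Perm.sign σ = u ∧ ({x | σ x = x} : Finset α) = S} =
      numDerangementsOfSign (Fintype.card α - #S) u := by
  have hS : Fintype.card {x // x ∉ S} = Fintype.card α - #S := by
    rw [Fintype.card_subtype_compl, Fintype.card_coe]
  rw [← hS, ← card_derangements_sign_eq, ← Fintype.card_subtype, ← Fintype.card_subtype]
  refine Fintype.card_congr ((subtypeSubtypeEquivSubtypeInter _ (Perm.sign · = u)).symm.trans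
    (((derangements.subtypeEquiv (· ∉ S)).subtypeEquiv fun τ => ?_).trans
    ((subtypeSubtypeEquivSubtypeInter _ (Perm.sign · = u)).trans
    (subtypeEquivRight fun σ => ?_)))).symm
  · -- `derangements.subtypeEquiv` extends a derangement by the identity, i.e. it is `Perm.ofSubtype`
    exact (Perm.sign_ofSubtype (f := τ.1)).symm ▸ Iff.rfl
  · rw [and_comm, Finset.ext_iff]
    simp [Function.mem_fixedPoints, Function.IsFixedPt, iff_comm]

theorem sum_sign_eq_sum_choose_smul {M : Type*} [AddCommMonoid M] (u : ℤˣ) (g : ℕ → M) :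
    ∑ σ : Perm α with Perm.sign σ = u, g #{x | σ x = x} =
      ∑ m ∈ range (Fintype.card α + 1),
        (Fintype.card α).choose m • numDerangementsOfSign (Fintype.card α - m) u • g m := by
  rw [← card_univ, ← sum_powerset_apply_card (fun m => numDerangementsOfSign (#univ - m) u • g m),
    powerset_univ, ← sum_fiberwise _ (fun σ : Perm α => ({x | σ x = x} : Finset α))]
  refine sum_congr rfl fun S _ => ?_
  rw [filter_filter, sum_congr rfl fun σ hσ => by rw [(mem_filter.1 hσ).2.2], sum_const,
    card_sign_fixedPoints_eq, card_univ]

theorem sum_sign_derangements :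
    ∑ σ : Perm α with σ ∈ derangements α, (Perm.sign σ : ℤ) =
      (-1) ^ Fintype.card α * (1 - Fintype.card α) := by
  have hdet : (Matrix.vecMulVec (1 : α → ℤ) 1 - 1).det =
      ∑ σ : Perm α with σ ∈ derangements α, (Perm.sign σ : ℤ) := by
    rw [Matrix.det_apply, sum_filter]
    refine sum_congr rfl fun σ _ => ?_
    split_ifs with hσ
    · rw [prod_eq_one fun x _ => by simp [hσ x], Units.smul_def, zsmul_one]; rfl
    · obtain ⟨x, hx⟩ : ∃ x, σ x = x := by simpa [derangements] using hσ
      rw [prod_eq_zero (mem_univ x) (by simp [hx]), smul_zero]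
  rw [← hdet, ← neg_sub, Matrix.det_neg, Matrix.vecMulVec_eq Unit, Matrix.det_one_sub_mul_comm]
  simp

end Counting

theorem two_mul_numDerangementsOfSign (k : ℕ) (u : ℤˣ) :
    2 * (numDerangementsOfSign k u : ℤ) = numDerangements k + u * ((-1) ^ k * (1 - k)) := by
  have hsign (σ : Perm (Fin k)) :
      (if Perm.sign σ = u then 2 else 0 : ℤ) = 1 + u * Perm.sign σ := by
    rcases Int.units_eq_one_or u with rfl | rfl <;>
      rcases Int.units_eq_one_or (Perm.sign σ) with h | h <;> simp [h]
  have hcard : #{σ : Perm (Fin k) | σ ∈ derangements (Fin k)} = numDerangements k := by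
    rw [← card_derangements_fin_eq_numDerangements, ← Fintype.card_subtype]
  rw [numDerangementsOfSign, ← filter_filter, card_filter, Nat.cast_sum, mul_sum]
  simp only [Nat.cast_ite, Nat.cast_one, Nat.cast_zero, mul_ite, mul_one, mul_zero, hsign,
    sum_add_distrib, sum_const, ← mul_sum, hcard, nsmul_one]
  rw [sum_sign_derangements, Fintype.card_fin]

theorem numDerangementsOfSign_le_factorial (k : ℕ) (u : ℤˣ) : numDerangementsOfSign k u ≤ k ! :=
  (card_filter_le _ _).trans (by simp [Fintype.card_perm])

theorem tendsto_two_mul_numDerangementsOfSign_div_factorial {ι : Type*} {l : Filter ι}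
    {k : ι → ℕ} (hk : Tendsto k l atTop) (u : ι → ℤˣ) :
    Tendsto (fun i => 2 * (numDerangementsOfSign (k i) (u i) : ℝ) / (k i)!) l
      (𝓝 (Real.exp (-1))) := by
  have hsigned : Tendsto (fun i => (u i : ℝ) * ((-1) ^ k i * (1 - k i)) / (k i)!) l (𝓝 0) := by
    refine squeeze_zero_norm (fun i => ?_)
      ((FloorSemiring.tendsto_pow_div_factorial_atTop (2 : ℝ)).comp hk)
    have hu : |(u i : ℝ)| = 1 := by
      rcases Int.units_eq_one_or (u i) with h | h <;> simp [h]
    have hpow : (k i : ℝ) < 2 ^ k i := by exact_mod_cast Nat.lt_two_pow_self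
    have hone : (1 : ℝ) ≤ 2 ^ k i := one_le_pow₀ one_le_two
    rw [Real.norm_eq_abs, abs_div, abs_mul, abs_mul, hu, abs_pow, abs_neg, abs_one, one_pow,
      one_mul, one_mul, Nat.abs_cast, Function.comp_apply]
    gcongr
    exact abs_le.2 ⟨by linarith, by linarith [(k i).cast_nonneg (α := ℝ)]⟩
  have := (numDerangements_tendsto_inv_e.comp hk).add hsigned
  rw [add_zero] at this
  refine this.congr fun i => ?_
  have h := two_mul_numDerangementsOfSign (k i) (u i)
  rw [← Int.cast_inj (α := ℝ)] at h
  push_cast at h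
  rw [Function.comp_apply, ← add_div, ← h]

theorem tendsto_sum_range_mul_of_tendsto {a : ℕ → ℝ} (ha : Summable a) {b : ℕ → ℕ → ℝ} {C L : ℝ}
    (hb : ∀ n k, |b n k| ≤ C) (hlim : ∀ m, Tendsto (fun n => b n (n - m)) atTop (𝓝 L)) :
    Tendsto (fun n => ∑ m ∈ range (n + 1), a m * b n (n - m)) atTop (𝓝 ((∑' m, a m) * L)) := by
  set F : ℕ → ℕ → ℝ := fun n m => if m ≤ n then a m * b n (n - m) else 0
  have hF (n : ℕ) : ∑ m ∈ range (n + 1), a m * b n (n - m) = ∑' m, F n m := by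
    rw [tsum_eq_sum (s := range (n + 1)) fun m hm => if_neg (by simpa [Nat.lt_succ_iff] using hm)]
    exact sum_congr rfl fun m hm => (if_pos (Nat.lt_succ_iff.1 (mem_range.1 hm))).symm
  have hC : 0 ≤ C := (abs_nonneg _).trans (hb 0 0)
  rw [← tsum_mul_right]
  refine (tendsto_tsum_of_dominated_convergence (ha.abs.mul_right C) (fun m => ?_)
    (Eventually.of_forall fun n m => ?_)).congr fun n => (hF n).symm
  · exact ((hlim m).const_mul (a m)).congr'
      ((eventually_ge_atTop m).mono fun n hn => (if_pos hn).symm)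
  · simp only [F]
    split_ifs
    · rw [Real.norm_eq_abs, abs_mul]
      exact mul_le_mul_of_nonneg_left (hb _ _) (abs_nonneg _)
    · simpa using mul_nonneg (abs_nonneg (a m)) hC

theorem sum_sign_numFix_div_factorial (n : ℕ) (u : ℤˣ) (g : ℕ → ℝ) :
    (∑ σ : Perm (Fin n) with Perm.sign σ = u, g (numFix σ)) / n ! =
      ∑ m ∈ range (n + 1), g m / m ! * (numDerangementsOfSign (n - m) u / (n - m)!) := by
  simp only [numFix]
  rw [sum_sign_eq_sum_choose_smul u g, Fintype.card_fin, sum_div]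
  refine sum_congr rfl fun m hm => ?_
  have hmn : m ≤ n := Nat.lt_succ_iff.1 (mem_range.1 hm)
  have hfac : (n.choose m * m ! * (n - m)! : ℝ) = n ! := by
    exact_mod_cast Nat.choose_mul_factorial_mul_factorial hmn
  have hchoose : (n.choose m : ℝ) ≠ 0 := Nat.cast_ne_zero.2 (Nat.choose_pos hmn).ne'
  rw [nsmul_eq_mul, nsmul_eq_mul, ← hfac]
  field_simp

theorem poisson_sub_eq_mul_fcFun (c : ℝ) (m : ℕ) :
    Real.exp (-(1 + Real.exp (-c))) * (1 + Real.exp (-c)) ^ m / (m ! : ℝ) -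
      Real.exp (-1) / (m ! : ℝ) = Real.exp (-1) / m ! * fcFun c m := by
  rw [fcFun, neg_add, Real.exp_add]
  ring

theorem summable_abs_fcFun_div_factorial (c : ℝ) : Summable fun m => |fcFun c m| / m ! := by
  have h := ((Real.summable_pow_div_factorial (1 + Real.exp (-c))).mul_left
    (Real.exp (-Real.exp (-c)))).sub (Real.summable_pow_div_factorial 1)
  refine h.abs.congr fun m => ?_
  rw [fcFun, one_pow, ← mul_div_assoc, ← sub_div, abs_div, Nat.abs_cast]

theorem fixed_points_parity_limit_general
    (c : ℝ) (ε : ℕ → ℤˣ) :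
    Filter.Tendsto
      (fun n => (2 / (n.factorial : ℝ)) *
        ∑ σ ∈ univ.filter (fun σ : Perm (Fin n) => Perm.sign σ = ε n),
          |fcFun c (numFix σ)|)
      Filter.atTop
      (nhds (∑' m : ℕ, (Real.exp (-1) / (m.factorial : ℝ)) * |fcFun c m|)) ∧
    (∑' m : ℕ, (Real.exp (-1) / (m.factorial : ℝ)) * |fcFun c m|) =
      ∑' m : ℕ,
        |Real.exp (-(1 + Real.exp (-c))) * (1 + Real.exp (-c)) ^ m / (m.factorial : ℝ) -
          Real.exp (-1) / (m.factorial : ℝ)| := by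
  refine ⟨?_, tsum_congr fun m => ?_⟩
  · have hbound (n k : ℕ) : |2 * (numDerangementsOfSign k (ε n) : ℝ) / k !| ≤ 2 := by
      rw [abs_of_nonneg (by positivity), div_le_iff₀ (by positivity)]
      gcongr
      exact_mod_cast numDerangementsOfSign_le_factorial k (ε n)
    have hlim := tendsto_sum_range_mul_of_tendsto (summable_abs_fcFun_div_factorial c) hbound
      fun m => tendsto_two_mul_numDerangementsOfSign_div_factorial (tendsto_sub_atTop_nat m) ε
    convert hlim using 2 with n
    · rw [div_mul_eq_mul_div, mul_div_assoc,
        sum_sign_numFix_div_factorial n (ε n) fun k => |fcFun c k|, mul_sum]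
      exact sum_congr rfl fun m _ => by ring
    · rw [← tsum_mul_right]
      exact tsum_congr fun m => by ring
  · rw [poisson_sub_eq_mul_fcFun, abs_mul, abs_of_pos (by positivity : 0 < Real.exp (-1) / m !)]

theorem fixed_points_parity_limit
    (c : ℝ) (ε : ℕ → ℤˣ) (hε : ∀ n, ε n = 1 ∨ ε n = -1) :
    Filter.Tendsto
      (fun n => (2 / (n.factorial : ℝ)) *
        ∑ σ ∈ univ.filter (fun σ : Perm (Fin n) => Perm.sign σ = ε n),
          |fcFun c (numFix σ)|)
      Filter.atTop
      (nhds (∑' m : ℕ, (Real.exp (-1) / (m.factorial : ℝ)) * |fcFun c m|)) ∧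
    (∑' m : ℕ, (Real.exp (-1) / (m.factorial : ℝ)) * |fcFun c m|) =
      ∑' m : ℕ,
        |Real.exp (-(1 + Real.exp (-c))) * (1 + Real.exp (-c)) ^ m / (m.factorial : ℝ) -
          Real.exp (-1) / (m.factorial : ℝ)| :=
  fixed_points_parity_limit_general c ε
end
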